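/- arXiv:2408.01947 — 6 statements merged into one kernel-verified Lean document; each statement's English description precedes it below -/
import Mathlib

section
/- Let n = 2 and c > 0. There is a constant C (depending on c) such that for all λ ≥ 2, d ∈ (0, 1], and every N ≥ 0, ∫₀^{λ^{-2}} t^{-1} e^{-c d²/t} dt ≤ C_N · log(2 + (λd)^{-1}) · (1 + λd)^{-N}. -/
/-!
Write `s = λd`, `a = cd²` and `T = λ⁻²`, so that `T / a = (cs²)⁻¹`.
For `s ≥ 1`, the exponential series gives `t⁻¹ e^{-a/t} ≤ (N+1)! a^{-N-1} t^N`, hence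
`∫₀^T t⁻¹ e^{-a/t} dt ≤ N! (cs²)^{-N-1}`, which decays faster than `(1 + s)^{-N}`.
For `s ≤ 1`, split the integral at `d² ≤ T`: below `d²` the integrand is at most `1/a`,
above it `e^{-a/t} ≤ 1` and `∫_{d²}^T dt/t = 2 log s⁻¹`.
-/

open MeasureTheory Real
open scoped Nat

section HeatIntegral

variable {a : ℝ}

lemma inv_mul_exp_neg_div_le (ha : 0 < a) (k : ℕ) {t : ℝ} (ht : 0 ≤ t) :
    t⁻¹ * exp (-a / t) ≤ (k + 1)! / a ^ (k + 1) * t ^ k := by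
  rcases ht.eq_or_lt with rfl | ht
  · simp only [inv_zero, zero_mul]
    positivity
  have hexp : (a / t) ^ (k + 1) / (k + 1)! ≤ exp (a / t) :=
    pow_div_factorial_le_exp (x := a / t) (by positivity) (k + 1)
  calc t⁻¹ * exp (-a / t)
      ≤ t⁻¹ * ((a / t) ^ (k + 1) / (k + 1)!)⁻¹ := by
        rw [neg_div, exp_neg]
        gcongr
    _ = (k + 1)! / a ^ (k + 1) * t ^ k := by
        rw [div_pow, pow_succ t]
        field_simp

lemma intervalIntegrable_inv_mul_exp_neg_div (ha : 0 < a) {T : ℝ} (hT : 0 ≤ T) :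
    IntervalIntegrable (fun t => t⁻¹ * exp (-a / t)) volume 0 T := by
  rw [intervalIntegrable_iff_integrableOn_Ioc_of_le hT]
  refine Measure.integrableOn_of_bounded (M := a⁻¹) measure_Ioc_lt_top.ne
    (by fun_prop) ?_
  filter_upwards [ae_restrict_mem measurableSet_Ioc] with t ht
  rw [norm_of_nonneg (mul_nonneg (inv_nonneg.2 ht.1.le) (exp_nonneg _))]
  simpa using inv_mul_exp_neg_div_le ha 0 ht.1.le

lemma integral_inv_mul_exp_neg_div_le_pow (ha : 0 < a) {T : ℝ} (hT : 0 ≤ T) (k : ℕ) :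
    ∫ t in (0 : ℝ)..T, t⁻¹ * exp (-a / t) ≤ k ! * (T / a) ^ (k + 1) := by
  calc ∫ t in (0 : ℝ)..T, t⁻¹ * exp (-a / t)
      ≤ ∫ t in (0 : ℝ)..T, (k + 1)! / a ^ (k + 1) * t ^ k :=
        intervalIntegral.integral_mono_on hT (intervalIntegrable_inv_mul_exp_neg_div ha hT)
          ((intervalIntegral.intervalIntegrable_pow (n := k)).const_mul _)
          fun t ht => inv_mul_exp_neg_div_le ha k ht.1
    _ = k ! * (T / a) ^ (k + 1) := by
        rw [intervalIntegral.integral_const_mul, integral_pow, Nat.factorial_succ, div_pow]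
        push_cast
        field_simp
        ring

lemma integral_inv_mul_exp_neg_div_le_log (ha : 0 < a) {σ T : ℝ} (hσ : 0 < σ) (hσT : σ ≤ T) :
    ∫ t in (0 : ℝ)..T, t⁻¹ * exp (-a / t) ≤ σ / a + log (T / σ) := by
  have hT : 0 < T := hσ.trans_le hσT
  have hint₁ := intervalIntegrable_inv_mul_exp_neg_div ha hσ.le
  have hint₂ : IntervalIntegrable (fun t => t⁻¹ * exp (-a / t)) volume σ T :=
    hint₁.symm.trans (intervalIntegrable_inv_mul_exp_neg_div ha hT.le)
  have hinv : IntervalIntegrable (fun t : ℝ => t⁻¹) volume σ T :=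
    intervalIntegral.intervalIntegrable_inv
      (fun t ht => (hσ.trans_le (Set.uIcc_of_le hσT ▸ ht).1).ne') continuousOn_id
  have hle_inv : ∀ t ∈ Set.Icc σ T, t⁻¹ * exp (-a / t) ≤ t⁻¹ := fun t ht => by
    have ht₀ : 0 < t := hσ.trans_le ht.1
    refine mul_le_of_le_one_right (inv_nonneg.2 ht₀.le) (exp_le_one_iff.2 ?_)
    exact div_nonpos_of_nonpos_of_nonneg (neg_nonpos.2 ha.le) ht₀.le
  rw [← intervalIntegral.integral_add_adjacent_intervals hint₁ hint₂]
  gcongr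
  · calc ∫ t in (0 : ℝ)..σ, t⁻¹ * exp (-a / t)
        ≤ ∫ _ in (0 : ℝ)..σ, a⁻¹ :=
          intervalIntegral.integral_mono_on hσ.le hint₁ intervalIntegrable_const
            fun t ht => by simpa using inv_mul_exp_neg_div_le ha 0 ht.1
      _ = σ / a := by simp [div_eq_mul_inv]
  · calc ∫ t in σ..T, t⁻¹ * exp (-a / t)
        ≤ ∫ t in σ..T, t⁻¹ := intervalIntegral.integral_mono_on hσT hint₂ hinv hle_inv
      _ = log (T / σ) := integral_inv_of_pos hσ hT

end HeatIntegral

lemma inv_sq_pow_succ_le_two_pow_mul_inv {s : ℝ} (hs : 1 ≤ s) (N : ℕ) :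
    ((s ^ 2) ^ (N + 1))⁻¹ ≤ 2 ^ N * ((1 + s) ^ N)⁻¹ := by
  have hgrowth : ((1 + s) / 2) ^ N ≤ (s ^ 2) ^ (N + 1) :=
    calc ((1 + s) / 2) ^ N ≤ s ^ N := by gcongr; linarith
      _ ≤ (s ^ 2) ^ N := by gcongr; nlinarith
      _ ≤ (s ^ 2) ^ (N + 1) := pow_le_pow_right₀ (by nlinarith) N.le_succ
  calc ((s ^ 2) ^ (N + 1))⁻¹ ≤ (((1 + s) / 2) ^ N)⁻¹ := inv_anti₀ (by positivity) hgrowth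
    _ = 2 ^ N * ((1 + s) ^ N)⁻¹ := by rw [div_pow, inv_div, div_eq_mul_inv]

section Rescaled

variable {c lam d : ℝ}

lemma integral_le_of_one_le_mul (hc : 0 < c) (hlam : 0 < lam) (hd : 0 < d)
    (hs : 1 ≤ lam * d) (N : ℕ) :
    ∫ t in (0 : ℝ)..(lam ^ 2)⁻¹, t⁻¹ * exp (-(c * d ^ 2) / t) ≤
      N ! / c ^ (N + 1) * (2 ^ N * ((1 + lam * d) ^ N)⁻¹) := by
  have hratio : (lam ^ 2)⁻¹ / (c * d ^ 2) = (c * (lam * d) ^ 2)⁻¹ := by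
    field_simp
  calc ∫ t in (0 : ℝ)..(lam ^ 2)⁻¹, t⁻¹ * exp (-(c * d ^ 2) / t)
      ≤ N ! * ((lam ^ 2)⁻¹ / (c * d ^ 2)) ^ (N + 1) :=
        integral_inv_mul_exp_neg_div_le_pow (by positivity) (by positivity) N
    _ = N ! / c ^ (N + 1) * (((lam * d) ^ 2) ^ (N + 1))⁻¹ := by
        rw [hratio, inv_pow, mul_pow, mul_inv, ← mul_assoc, div_eq_mul_inv]
    _ ≤ N ! / c ^ (N + 1) * (2 ^ N * ((1 + lam * d) ^ N)⁻¹) := by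
        gcongr
        exact inv_sq_pow_succ_le_two_pow_mul_inv hs N

lemma integral_le_of_mul_le_one (hc : 0 < c) (hlam : 0 < lam) (hd : 0 < d)
    (hs : lam * d ≤ 1) :
    ∫ t in (0 : ℝ)..(lam ^ 2)⁻¹, t⁻¹ * exp (-(c * d ^ 2) / t) ≤ c⁻¹ + 2 * log (lam * d)⁻¹ := by
  have hσT : d ^ 2 ≤ (lam ^ 2)⁻¹ :=
    calc d ^ 2 = (lam * d) ^ 2 * (lam ^ 2)⁻¹ := by field_simp
      _ ≤ 1 * (lam ^ 2)⁻¹ := by gcongr; exact pow_le_one₀ (by positivity) hs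
      _ = (lam ^ 2)⁻¹ := one_mul _
  calc ∫ t in (0 : ℝ)..(lam ^ 2)⁻¹, t⁻¹ * exp (-(c * d ^ 2) / t)
      ≤ d ^ 2 / (c * d ^ 2) + log ((lam ^ 2)⁻¹ / d ^ 2) :=
        integral_inv_mul_exp_neg_div_le_log (by positivity) (by positivity) hσT
    _ = c⁻¹ + 2 * log (lam * d)⁻¹ := by
        have hratio : (lam ^ 2)⁻¹ / d ^ 2 = (lam * d)⁻¹ ^ 2 := by field_simp
        rw [hratio, log_pow]
        push_cast
        field_simp

lemma integral_le_add_log_mul_decay (hc : 0 < c) (hlam : 0 < lam) (hd : 0 < d) (N : ℕ) :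
    ∫ t in (0 : ℝ)..(lam ^ 2)⁻¹, t⁻¹ * exp (-(c * d ^ 2) / t) ≤
      (N ! / c ^ (N + 1) + c⁻¹ + 2 * log (2 + (lam * d)⁻¹)) *
        (2 ^ N * ((1 + lam * d) ^ N)⁻¹) := by
  have hs : 0 < lam * d := mul_pos hlam hd
  have hlog : 0 ≤ log (2 + (lam * d)⁻¹) := log_nonneg (by linarith [inv_pos.2 hs])
  rcases le_total 1 (lam * d) with hs₁ | hs₁
  · refine (integral_le_of_one_le_mul hc hlam hd hs₁ N).trans ?_
    gcongr
    linarith [inv_pos.2 hc]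
  · have hweight : 1 ≤ 2 ^ N * ((1 + lam * d) ^ N)⁻¹ := by
      rw [← div_eq_mul_inv, one_le_div₀ (by positivity)]
      gcongr
      linarith
    have hlog_inv : log (lam * d)⁻¹ ≤ log (2 + (lam * d)⁻¹) :=
      log_le_log (by positivity) (by linarith)
    have hfac : (0 : ℝ) ≤ N ! / c ^ (N + 1) := by positivity
    calc ∫ t in (0 : ℝ)..(lam ^ 2)⁻¹, t⁻¹ * exp (-(c * d ^ 2) / t)
        ≤ c⁻¹ + 2 * log (lam * d)⁻¹ := integral_le_of_mul_le_one hc hlam hd hs₁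
      _ ≤ N ! / c ^ (N + 1) + c⁻¹ + 2 * log (2 + (lam * d)⁻¹) := by linarith
      _ ≤ _ := le_mul_of_one_le_right (by positivity) hweight

end Rescaled

/-- Heat-kernel integral estimate, `n = 2`: for every `N` there is `C` such that for all
`λ ≥ 2`, `d ∈ (0,1]`, `∫₀^{λ^{-2}} t^{-1} e^{-cd²/t} dt ≤ C · log(2 + (λd)⁻¹) · (1 + λd)^{-N}`. -/
theorem heat_integral_bound_dim_two (c : ℝ) (hc : 0 < c) (N : ℕ) :
    ∃ C > (0:ℝ), ∀ lam ≥ (2:ℝ), ∀ d : ℝ, 0 < d → d ≤ 1 →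
      (∫ t in (0:ℝ)..lam ^ (-2 : ℝ), t⁻¹ * Real.exp (-c * d ^ 2 / t)) ≤
        C * Real.log (2 + (lam * d)⁻¹) * (1 + lam * d) ^ (-(N : ℝ)) := by
  set A : ℝ := N ! / c ^ (N + 1) + c⁻¹
  refine ⟨2 ^ N * (A / log 2 + 2), by positivity, fun lam hlam d hd _ => ?_⟩
  have hlam₀ : 0 < lam := by linarith
  set L := log (2 + (lam * d)⁻¹)
  have hlog_two : log 2 ≤ L := log_le_log two_pos (by linarith [inv_pos.2 (mul_pos hlam₀ hd)])
  have hA : A ≤ A / log 2 * L := by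
    rw [div_mul_eq_mul_div, le_div_iff₀ (log_pos one_lt_two)]
    gcongr
  rw [show lam ^ (-2 : ℝ) = (lam ^ 2)⁻¹ by rw [rpow_neg hlam₀.le]; norm_cast,
    rpow_neg (by positivity), rpow_natCast]
  simp only [neg_mul]
  calc ∫ t in (0 : ℝ)..(lam ^ 2)⁻¹, t⁻¹ * exp (-(c * d ^ 2) / t)
      ≤ (A + 2 * L) * (2 ^ N * ((1 + lam * d) ^ N)⁻¹) :=
        integral_le_add_log_mul_decay hc hlam₀ hd N
    _ ≤ (A / log 2 * L + 2 * L) * (2 ^ N * ((1 + lam * d) ^ N)⁻¹) := by gcongr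
    _ = 2 ^ N * (A / log 2 + 2) * L * ((1 + lam * d) ^ N)⁻¹ := by ring
end

section
/- Fix λ ≥ 10 and χ ∈ C₀^∞(ℝ) supported in (-1,1) with χ_λ(s) = χ(λ - s). Define m₂(μ, s) = χ_λ(s) e^{-λ^{-2}(μ² - s²)}/(μ² - s²). Then for every N ≥ 0 there is a constant C_N depending only on χ and N such that for all ℓ ≥ 1, all μ with μ ∈ (2^ℓ λ, 2^{ℓ+1} λ], and all s with |s - λ| ≤ 1, |m₂(μ, s)| + |∂_s m₂(μ, s)| ≤ C_N λ^{-2} 2^{-Nℓ}. -/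
set_option maxHeartbeats 1600000 in
/-- Case 5 high-frequency symbol decay: with `χ ∈ C₀^∞` supported in `(-1,1)`,
`m₂(μ,s) = χ(λ-s) e^{-λ^{-2}(μ²-s²)}/(μ²-s²)`, for every `N` there is `C_N` depending only
on `χ, N` such that for all `λ ≥ 10`, `ℓ ≥ 1`, `μ ∈ (2^ℓλ, 2^{ℓ+1}λ]`, `|s-λ| ≤ 1`:
`|m₂(μ,s)| + |∂_s m₂(μ,s)| ≤ C_N λ^{-2} 2^{-Nℓ}`. -/
theorem case5_high_freq_symbol_decay (χ : ℝ → ℝ) (hχ : ContDiff ℝ (⊤ : ℕ∞) χ)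
    (hcs : HasCompactSupport χ) (hsupp : Function.support χ ⊆ Set.Ioo (-1) 1)
    (N : ℕ) :
    ∃ C > (0:ℝ), ∀ lam ≥ (10:ℝ), ∀ ℓ : ℕ, 1 ≤ ℓ →
      ∀ μ s : ℝ, μ ∈ Set.Ioc ((2:ℝ) ^ ℓ * lam) ((2:ℝ) ^ (ℓ + 1) * lam) → |s - lam| ≤ 1 →
      |χ (lam - s) * Real.exp (-(lam ^ 2)⁻¹ * (μ ^ 2 - s ^ 2)) / (μ ^ 2 - s ^ 2)| +
        |deriv (fun s' =>
          χ (lam - s') * Real.exp (-(lam ^ 2)⁻¹ * (μ ^ 2 - s' ^ 2)) / (μ ^ 2 - s' ^ 2)) s| ≤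
        C * (lam ^ 2)⁻¹ * ((2:ℝ) ^ (N * ℓ))⁻¹ := by
  obtain ⟨M, hM⟩ := hcs.exists_bound_of_continuous hχ.continuous
  obtain ⟨M', hM'⟩ := (hcs.deriv).exists_bound_of_continuous (hχ.continuous_deriv (by simp))
  have hM0 : 0 ≤ M := le_trans (abs_nonneg _) (hM 0)
  have hM'0 : 0 ≤ M' := le_trans (abs_nonneg _) (hM' 0)
  refine ⟨(2*M + M' + 1) * ((N.factorial : ℝ) * 4 ^ N), by positivity, ?_⟩
  intro lam hlam ℓ hℓ μ s hμ hs
  obtain ⟨hμ1, hμ2⟩ := hμ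
  rw [abs_sub_le_iff] at hs
  have hs1 : lam - 1 ≤ s := by linarith [hs.2]
  have hs2 : s ≤ lam + 1 := by linarith [hs.1]
  have hspos : 0 < s := by linarith
  have hl4 : (4:ℝ) ≤ 4 ^ ℓ := by
    calc (4:ℝ) = 4 ^ 1 := (pow_one 4).symm
    _ ≤ 4 ^ ℓ := pow_le_pow_right₀ (by norm_num) hℓ
  have hμsq : (4:ℝ) ^ ℓ * lam ^ 2 ≤ μ ^ 2 := by
    have h2l : (0:ℝ) < 2 ^ ℓ * lam := by positivity
    have h1 : ((2:ℝ) ^ ℓ * lam) ^ 2 ≤ μ ^ 2 := by nlinarith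
    calc (4:ℝ) ^ ℓ * lam ^ 2 = ((2:ℝ) ^ ℓ * lam) ^ 2 := by
          rw [mul_pow, ← pow_mul, mul_comm ℓ 2, pow_mul]; norm_num
    _ ≤ μ ^ 2 := h1
  have hssq : s ^ 2 ≤ 2 * lam ^ 2 := by nlinarith
  have hDlb : (4:ℝ) ^ ℓ * lam ^ 2 / 2 ≤ μ ^ 2 - s ^ 2 := by nlinarith
  have hD2 : 2 * lam ^ 2 ≤ μ ^ 2 - s ^ 2 := by nlinarith
  have hDpos : 0 < μ ^ 2 - s ^ 2 := by nlinarith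
  have hDne : μ ^ 2 - s ^ 2 ≠ 0 := ne_of_gt hDpos
  have hlam2 : (0:ℝ) < lam ^ 2 := by positivity
  -- derivative computation
  have hχd : Differentiable ℝ χ := hχ.differentiable (by simp)
  have hinner : HasDerivAt (fun s' : ℝ => lam - s') (-1) s := by
    simpa using (hasDerivAt_id s).const_sub lam
  have hg : HasDerivAt (fun s' : ℝ => χ (lam - s')) (deriv χ (lam - s) * -1) s :=
    (hχd (lam - s)).hasDerivAt.comp s hinner
  have hDd : HasDerivAt (fun s' : ℝ => μ ^ 2 - s' ^ 2) (-(2 * s)) s := by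
    simpa using (hasDerivAt_pow 2 s).const_sub (μ ^ 2)
  have hE : HasDerivAt (fun s' : ℝ => Real.exp (-(lam ^ 2)⁻¹ * (μ ^ 2 - s' ^ 2)))
      (Real.exp (-(lam ^ 2)⁻¹ * (μ ^ 2 - s ^ 2)) * (-(lam ^ 2)⁻¹ * -(2 * s))) s :=
    (hDd.const_mul (-(lam ^ 2)⁻¹)).exp
  have hf : HasDerivAt
      (fun s' => χ (lam - s') * Real.exp (-(lam ^ 2)⁻¹ * (μ ^ 2 - s' ^ 2)) / (μ ^ 2 - s' ^ 2))
      ((((deriv χ (lam - s) * -1) * Real.exp (-(lam ^ 2)⁻¹ * (μ ^ 2 - s ^ 2))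
         + χ (lam - s) * (Real.exp (-(lam ^ 2)⁻¹ * (μ ^ 2 - s ^ 2)) * (-(lam ^ 2)⁻¹ * -(2 * s))))
           * (μ ^ 2 - s ^ 2)
        - χ (lam - s) * Real.exp (-(lam ^ 2)⁻¹ * (μ ^ 2 - s ^ 2)) * -(2 * s))
          / (μ ^ 2 - s ^ 2) ^ 2) s :=
    (hg.mul hE).div hDd hDne
  rw [hf.deriv]
  clear hf hE hDd hg hinner hχd hχ hcs hsupp
  -- fold abbreviations
  set D : ℝ := μ ^ 2 - s ^ 2 with hDdef
  set A : ℝ := Real.exp (-(lam ^ 2)⁻¹ * D) with hAdef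
  set cv := χ (lam - s) with hcvdef
  set cv' := deriv χ (lam - s) with hcv'def
  have hApos : 0 < A := Real.exp_pos _
  -- bound on A
  have hA : A ≤ (N.factorial : ℝ) * 4 ^ N * ((2:ℝ) ^ (N * ℓ))⁻¹ := by
    have h1 : -(lam ^ 2)⁻¹ * D ≤ -(4 ^ ℓ / 4) := by
      rw [neg_mul, neg_le_neg_iff, inv_mul_eq_div, le_div_iff₀ hlam2]
      nlinarith
    have h2 : A ≤ Real.exp (-(4 ^ ℓ / 4)) := Real.exp_le_exp.mpr h1
    have hxN : (0:ℝ) < ((4:ℝ) ^ ℓ / 4) ^ N := by positivity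
    have hfac : (0:ℝ) < (N.factorial : ℝ) := by exact_mod_cast N.factorial_pos
    have h3 : ((4:ℝ) ^ ℓ / 4) ^ N / (N.factorial : ℝ) ≤ Real.exp (4 ^ ℓ / 4) :=
      Real.pow_div_factorial_le_exp ((4:ℝ) ^ ℓ / 4) (by positivity) N
    have h4 : Real.exp (-(4 ^ ℓ / 4)) ≤ (N.factorial : ℝ) / ((4:ℝ) ^ ℓ / 4) ^ N := by
      rw [le_div_iff₀ hxN, Real.exp_neg, inv_mul_eq_div, div_le_iff₀ (Real.exp_pos _)]
      rw [div_le_iff₀ hfac] at h3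
      linarith
    have h2pow : (2:ℝ) ^ (N * ℓ) ≤ 4 ^ (N * ℓ) :=
      pow_le_pow_left₀ (by norm_num) (by norm_num) _
    have h5 : (N.factorial : ℝ) / ((4:ℝ) ^ ℓ / 4) ^ N ≤
        (N.factorial : ℝ) * 4 ^ N * ((2:ℝ) ^ (N * ℓ))⁻¹ := by
      have e1 : (((4:ℝ) ^ ℓ / 4) ^ N)⁻¹ = 4 ^ N * ((4:ℝ) ^ (N * ℓ))⁻¹ := by
        rw [div_pow, ← pow_mul, mul_comm ℓ N]
        field_simp
      rw [div_eq_mul_inv, e1, ← mul_assoc]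
      gcongr
    exact h2.trans (h4.trans h5)
  have hcvb : |cv| ≤ M := hM _
  have hcv'b : |cv'| ≤ M' := hM' _
  clear_value D A cv cv'
  clear hDdef hAdef hcvdef hcv'def hM hM' hDlb hμsq hssq hμ1 hμ2 hs hl4 hDne
  have hsmall1 : (lam ^ 2)⁻¹ * (2 * s) ≤ 1 := by
    rw [inv_mul_eq_div, div_le_one hlam2]; nlinarith
  have hsmall2 : 2 * s ≤ lam ^ 2 := by nlinarith
  -- bound first term
  have t1 : |cv * A / D| ≤ M * A / (2 * lam ^ 2) := by
    rw [abs_div, abs_mul, abs_of_pos hApos, abs_of_pos hDpos]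
    exact div_le_div₀ (by positivity) (by gcongr) (by positivity) hD2
  -- bound numerator of derivative
  have hU : |((cv' * -1) * A + cv * (A * (-(lam ^ 2)⁻¹ * -(2 * s)))) * D - cv * A * -(2 * s)|
      ≤ (M' + M) * A * D + M * A * lam ^ 2 := by
    have e2 : -(lam ^ 2)⁻¹ * -(2 * s) = (lam ^ 2)⁻¹ * (2 * s) := by ring
    calc |((cv' * -1) * A + cv * (A * (-(lam ^ 2)⁻¹ * -(2 * s)))) * D - cv * A * -(2 * s)|
        ≤ |((cv' * -1) * A + cv * (A * (-(lam ^ 2)⁻¹ * -(2 * s)))) * D| + |cv * A * -(2 * s)| :=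
          abs_sub _ _
      _ = |(cv' * -1) * A + cv * (A * ((lam ^ 2)⁻¹ * (2 * s)))| * D + |cv| * A * (2 * s) := by
          rw [e2, abs_mul, abs_of_pos hDpos, abs_mul, abs_mul, abs_of_pos hApos, abs_neg,
            abs_of_pos (by positivity : (0:ℝ) < 2 * s)]
      _ ≤ (|cv'| * A + |cv| * (A * ((lam ^ 2)⁻¹ * (2 * s)))) * D + M * A * (2 * s) := by
          gcongr ?_ * D + ?_
          · calc |(cv' * -1) * A + cv * (A * ((lam ^ 2)⁻¹ * (2 * s)))|
                ≤ |(cv' * -1) * A| + |cv * (A * ((lam ^ 2)⁻¹ * (2 * s)))| := abs_add_le _ _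
              _ = |cv'| * A + |cv| * (A * ((lam ^ 2)⁻¹ * (2 * s))) := by
                  rw [abs_mul, abs_mul, abs_mul, abs_neg, abs_one, mul_one, abs_of_pos hApos,
                    abs_of_pos (by positivity : (0:ℝ) < A * ((lam ^ 2)⁻¹ * (2 * s)))]
          · gcongr
      _ ≤ (M' * A + M * (A * 1)) * D + M * A * lam ^ 2 := by gcongr
      _ = (M' + M) * A * D + M * A * lam ^ 2 := by ring
  have t2 : |(((cv' * -1) * A + cv * (A * (-(lam ^ 2)⁻¹ * -(2 * s)))) * D
      - cv * A * -(2 * s)) / D ^ 2| ≤ ((M' + M) * A * D + M * A * lam ^ 2) / D ^ 2 := by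
    rw [abs_div, abs_of_pos (by positivity : (0:ℝ) < D ^ 2)]
    gcongr
  have t3 : ((M' + M) * A * D + M * A * lam ^ 2) / D ^ 2
      ≤ (M' + M) * A / (2 * lam ^ 2) + M * A / (4 * lam ^ 2) := by
    rw [add_div]
    have p1 : (M' + M) * A * D / D ^ 2 = (M' + M) * A / D := by
      rw [pow_two]; field_simp
    have p2 : M * A * lam ^ 2 / D ^ 2 ≤ M * A / (4 * lam ^ 2) := by
      rw [div_le_div_iff₀ (by positivity) (by positivity)]
      have hDD : (2 * lam ^ 2) * (2 * lam ^ 2) ≤ D * D :=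
        mul_le_mul hD2 hD2 (by positivity) hDpos.le
      nlinarith [mul_nonneg (mul_nonneg hM0 hApos.le) (sub_nonneg.mpr hDD)]
    have p1' : (M' + M) * A / D ≤ (M' + M) * A / (2 * lam ^ 2) :=
      div_le_div₀ (by positivity) le_rfl (by positivity) hD2
    rw [p1]; linarith
  have total : M * A / (2 * lam ^ 2) + ((M' + M) * A / (2 * lam ^ 2) + M * A / (4 * lam ^ 2))
      ≤ (2*M + M' + 1) * A * (lam ^ 2)⁻¹ := by
    have hL : (lam:ℝ) ^ 2 ≠ 0 := ne_of_gt hlam2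
    have e4 : M * A / (2 * lam ^ 2) + ((M' + M) * A / (2 * lam ^ 2) + M * A / (4 * lam ^ 2))
        = (M / 2 + (M' + M) / 2 + M / 4) * A / lam ^ 2 := by
      field_simp
      ring
    have e3 : (2*M + M' + 1) * A * (lam ^ 2)⁻¹ = ((2*M + M' + 1) * A) / lam ^ 2 := by
      rw [← div_eq_mul_inv]
    rw [e4, e3]
    exact (div_le_div_iff_of_pos_right hlam2).mpr (mul_le_mul_of_nonneg_right (by linarith) hApos.le)
  calc |cv * A / D| + |(((cv' * -1) * A + cv * (A * (-(lam ^ 2)⁻¹ * -(2 * s)))) * D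
      - cv * A * -(2 * s)) / D ^ 2|
      ≤ M * A / (2 * lam ^ 2) + ((M' + M) * A / (2 * lam ^ 2) + M * A / (4 * lam ^ 2)) := by
        have := t2.trans t3
        linarith
    _ ≤ (2*M + M' + 1) * A * (lam ^ 2)⁻¹ := total
    _ ≤ (2*M + M' + 1) * ((N.factorial : ℝ) * 4 ^ N * ((2:ℝ) ^ (N * ℓ))⁻¹) * (lam ^ 2)⁻¹ := by
        gcongr
    _ = (2*M + M' + 1) * ((N.factorial : ℝ) * 4 ^ N) * (lam ^ 2)⁻¹ * ((2:ℝ) ^ (N * ℓ))⁻¹ := by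
        ring
end

section
/- Let k ≥ 1, λ ≥ 1. Define the phase φ(u) = √(|u₁ - 1|² + |u'|² + t²) − √(|u₁ - z₁|² + |u'|² + t²) for u = (u₁, u') ∈ ℝ × ℝ^{k-1}, where t ≈ r ∈ (0,1] and z₁ ∼ 1, z₁ ≠ 1. Then on the region where both square roots are ≈ 1, one has |∂_{u₁} φ(u)| ≳ (r² + |u'|²)|1 − z₁| and for every multi-index α in u₁, |∂_{u₁}^α φ(u)| ≲ (r² + |u'|²)|1 − z₁|. -/
/-!
Write `s = ‖u'‖² + t²`, which lies between `r² + ‖u'‖²` and `4 (r² + ‖u'‖²)`, and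
`F x = √(x² + s)`. The phase is `F (u₁ - 1) - F (u₁ - z₁)`, so its `m`-th derivative is
`F⁽ᵐ⁾ a - F⁽ᵐ⁾ b` with `a = u₁ - 1`, `b = u₁ - z₁`, `|a - b| = |1 - z₁|`.
Since `F'' x = s (x² + s)^(-3/2)`, the mean value theorem on the segment `[a, b]` gives both
bounds: the lower one because `F'' ≥ s / 8` where `x² + s ≤ 4`, the upper one because, by
Faà di Bruno, the derivatives of `x ↦ (x² + s)^(-3/2)` are bounded uniformly in `s` as long as
`x² + s` stays in a compact subinterval of `(0, ∞)`, here `[3/16, 4]`.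
-/

open Set Finset Nat

theorem abs_iteratedDeriv_sq_add_le (s x : ℝ) {i : ℕ} (hi : 1 ≤ i) :
    |iteratedDeriv i (fun x => x ^ 2 + s) x| ≤ (x ^ 2 + 2) ^ i := by
  have h1 : deriv (fun x : ℝ => x ^ 2 + s) = fun x => 2 * x := by
    ext x; simp
  have h2 : deriv (fun x : ℝ => 2 * x) = fun _ => 2 := by
    ext x; simp
  obtain rfl | rfl | ⟨j, rfl⟩ : i = 1 ∨ i = 2 ∨ ∃ j, i = j + 3 := by
    rcases i with _ | _ | _ | j <;> simp_all
  · rw [iteratedDeriv_one, h1, abs_mul, abs_two, pow_one]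
    nlinarith [sq_nonneg (|x| - 1), sq_abs x]
  · rw [iteratedDeriv_succ', iteratedDeriv_one, h1, h2, abs_two]
    nlinarith [sq_nonneg x]
  · rw [iteratedDeriv_succ', iteratedDeriv_succ', iteratedDeriv_succ', h1, h2]
    simp only [deriv_const', iteratedDeriv_const, ite_self, abs_zero]
    positivity

theorem exists_abs_iteratedDeriv_comp_sq_add_le {g : ℝ → ℝ} {n : ℕ}
    (hg : ContDiffOn ℝ n g (Ioi 0)) {δ Λ : ℝ} (hδ : 0 < δ) :
    ∃ K, ∀ s x : ℝ, 0 < s → δ ≤ x ^ 2 + s → x ^ 2 + s ≤ Λ →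
      |iteratedDeriv n (fun x => g (x ^ 2 + s)) x| ≤ K := by
  obtain ⟨C, hC⟩ : ∃ C, ∀ y ∈ Icc δ Λ, ∀ i ≤ n,
      ‖iteratedFDerivWithin ℝ i g (Ioi 0) y‖ ≤ C := by
    have hcont : ContinuousOn
        (fun y => ∑ i ∈ range (n + 1), ‖iteratedFDerivWithin ℝ i g (Ioi 0) y‖) (Icc δ Λ) :=
      continuousOn_finsetSum _ fun i hi =>
        ((hg.continuousOn_iteratedFDerivWithin (by exact_mod_cast mem_range_succ_iff.1 hi)
          (uniqueDiffOn_Ioi 0)).norm).mono fun y hy => lt_of_lt_of_le hδ hy.1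
    obtain ⟨C, hC⟩ := isCompact_Icc.exists_bound_of_continuousOn hcont
    refine ⟨C, fun y hy i hi => le_trans ?_ ((le_abs_self _).trans (hC y hy))⟩
    exact single_le_sum (f := fun i => ‖iteratedFDerivWithin ℝ i g (Ioi 0) y‖)
      (fun _ _ => norm_nonneg _) (mem_range_succ_iff.2 hi)
  refine ⟨n ! * C * (Λ + 2) ^ n, fun s x hs hlo hhi => ?_⟩
  have hD : ∀ i, 1 ≤ i → i ≤ n → ‖iteratedFDeriv ℝ i (fun x => x ^ 2 + s) x‖ ≤ (Λ + 2) ^ i := by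
    intro i hi _
    rw [norm_iteratedFDeriv_eq_norm_iteratedDeriv, Real.norm_eq_abs]
    exact (abs_iteratedDeriv_sq_add_le s x hi).trans
      (pow_le_pow_left₀ (by positivity) (by linarith) i)
  have hcomp := norm_iteratedFDeriv_comp_le' (g := g) (t := Ioi 0)
    (by rintro _ ⟨y, rfl⟩; exact mem_Ioi.2 (by positivity)) (uniqueDiffOn_Ioi 0) hg
    (contDiff_id.pow 2 |>.add contDiff_const) le_rfl x (fun i hi => hC _ ⟨hlo, hhi⟩ i hi) hD
  rwa [norm_iteratedFDeriv_eq_norm_iteratedDeriv, Real.norm_eq_abs] at hcomp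

theorem contDiff_sqrt_sq_add {n : WithTop ℕ∞} {s : ℝ} (hs : 0 < s) :
    ContDiff ℝ n fun x : ℝ => √(x ^ 2 + s) :=
  contDiff_iff_contDiffAt.2 fun x =>
    ((contDiff_id.pow 2).add contDiff_const).contDiffAt.sqrt (by positivity)

theorem hasDerivAt_sqrt_sq_add {s : ℝ} (hs : 0 < s) (x : ℝ) :
    HasDerivAt (fun x => √(x ^ 2 + s)) (x / √(x ^ 2 + s)) x := by
  convert (((hasDerivAt_pow 2 x).add_const s).sqrt (by positivity)) using 1
  ring

theorem hasDerivAt_div_sqrt_sq_add {s : ℝ} (hs : 0 < s) (x : ℝ) :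
    HasDerivAt (fun x => x / √(x ^ 2 + s)) (s * (x ^ 2 + s) ^ (-(3 / 2) : ℝ)) x := by
  have hpos : 0 < x ^ 2 + s := by positivity
  refine ((hasDerivAt_id x).div (hasDerivAt_sqrt_sq_add hs x)
    (Real.sqrt_pos.2 hpos).ne').congr_deriv ?_
  rw [Real.rpow_neg hpos.le, show (3 / 2 : ℝ) = 1 + 1 / 2 by norm_num, Real.rpow_add hpos,
    Real.rpow_one, ← Real.sqrt_eq_rpow]
  field_simp
  rw [id, Real.sq_sqrt hpos.le]
  ring

theorem iteratedDeriv_add_two_sqrt_sq_add {s : ℝ} (hs : 0 < s) (n : ℕ) :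
    iteratedDeriv (n + 2) (fun x => √(x ^ 2 + s)) =
      fun x => s * iteratedDeriv n (fun x => (x ^ 2 + s) ^ (-(3 / 2) : ℝ)) x := by
  have h1 : deriv (fun x => √(x ^ 2 + s)) = fun x => x / √(x ^ 2 + s) :=
    funext fun x => (hasDerivAt_sqrt_sq_add hs x).deriv
  have h2 : deriv (fun x => x / √(x ^ 2 + s)) = fun x => s * (x ^ 2 + s) ^ (-(3 / 2) : ℝ) :=
    funext fun x => (hasDerivAt_div_sqrt_sq_add hs x).deriv
  rw [iteratedDeriv_succ', iteratedDeriv_succ', h1, h2]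
  exact funext fun x => iteratedDeriv_const_mul_field s _

theorem sq_add_le_of_mem_uIcc {a b x s Λ : ℝ} (hx : x ∈ uIcc a b)
    (ha : a ^ 2 + s ≤ Λ) (hb : b ^ 2 + s ≤ Λ) : x ^ 2 + s ≤ Λ := by
  have hconv : ConvexOn ℝ univ fun x : ℝ => x ^ 2 + s :=
    (Even.convexOn_pow even_two).add_const s
  exact (hconv.le_on_segment (mem_univ a) (mem_univ b) (by rwa [segment_eq_uIcc])).trans
    (max_le ha hb)

theorem le_sq_add_of_mem_uIcc {a b x s : ℝ} (hx : x ∈ uIcc a b)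
    (ha : 1 / 4 ≤ a ^ 2 + s) (hb : 1 / 4 ≤ b ^ 2 + s) (hab : |a - b| ≤ 1 / 2) :
    3 / 16 ≤ x ^ 2 + s := by
  wlog hle : a ≤ b generalizing a b
  · exact this (uIcc_comm a b ▸ hx) hb ha (abs_sub_comm a b ▸ hab) (le_of_not_ge hle)
  rw [uIcc_of_le hle] at hx
  rw [abs_le] at hab
  obtain ⟨hax, hxb⟩ := hx
  rcases le_total 0 a with ha0 | ha0
  · nlinarith
  rcases le_total b 0 with hb0 | hb0
  · nlinarith
  -- `a < 0 < b` with `b - a ≤ 1/2`: one endpoint has modulus `≤ 1/4`, which forces `s ≥ 3/16`.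
  · rcases le_total (-a) (1 / 4) with h | h <;> nlinarith

theorem exists_abs_iteratedDeriv_sqrt_sq_add_sub_le (n : ℕ) {δ Λ : ℝ} (hδ : 0 < δ) :
    ∃ K, ∀ s a b : ℝ, 0 < s → (∀ x ∈ uIcc a b, δ ≤ x ^ 2 + s ∧ x ^ 2 + s ≤ Λ) →
      |iteratedDeriv (n + 1) (fun x => √(x ^ 2 + s)) a -
        iteratedDeriv (n + 1) (fun x => √(x ^ 2 + s)) b| ≤ K * s * |a - b| := by
  have hg : ContDiffOn ℝ n (fun y : ℝ => y ^ (-(3 / 2) : ℝ)) (Ioi 0) := fun y hy =>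
    (Real.contDiffAt_rpow_const_of_ne (ne_of_gt hy)).contDiffWithinAt
  obtain ⟨K, hK⟩ := exists_abs_iteratedDeriv_comp_sq_add_le (Λ := Λ) hg hδ
  refine ⟨K, fun s a b hs hab => ?_⟩
  have hdiff : Differentiable ℝ (iteratedDeriv (n + 1) fun x => √(x ^ 2 + s)) :=
    (contDiff_sqrt_sq_add (n := n + 2) hs).differentiable_iteratedDeriv _
      (mod_cast Nat.lt_succ_self _)
  have hbound : ∀ x ∈ uIcc a b,
      ‖deriv (iteratedDeriv (n + 1) fun x => √(x ^ 2 + s)) x‖ ≤ K * s := by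
    intro x hx
    rw [← iteratedDeriv_succ, iteratedDeriv_add_two_sqrt_sq_add hs, Real.norm_eq_abs, abs_mul,
      abs_of_pos hs, mul_comm K]
    exact mul_le_mul_of_nonneg_left (hK s x hs (hab x hx).1 (hab x hx).2) hs.le
  simpa only [Real.norm_eq_abs] using Convex.norm_image_sub_le_of_norm_deriv_le
    (fun x _ => hdiff x) hbound (convex_uIcc a b) right_mem_uIcc left_mem_uIcc

theorem mul_abs_sub_le_abs_div_sqrt_sq_add_sub {s a b : ℝ} (hs : 0 < s)
    (hab : ∀ x ∈ uIcc a b, x ^ 2 + s ≤ 4) :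
    s / 8 * |a - b| ≤ |a / √(a ^ 2 + s) - b / √(b ^ 2 + s)| := by
  wlog hle : a ≤ b generalizing a b
  · rw [abs_sub_comm, abs_sub_comm (a / _)]
    exact this (uIcc_comm a b ▸ hab) (le_of_not_ge hle)
  have hderiv : ∀ x ∈ interior (Icc a b), s / 8 ≤ deriv (fun x => x / √(x ^ 2 + s)) x := by
    intro x hx
    rw [interior_Icc] at hx
    rw [(hasDerivAt_div_sqrt_sq_add hs x).deriv, div_eq_mul_inv]
    refine mul_le_mul_of_nonneg_left ?_ hs.le
    calc (8 : ℝ)⁻¹ = 4 ^ (-(3 / 2) : ℝ) := by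
          rw [show (4 : ℝ) = 2 ^ (2 : ℝ) by norm_num, ← Real.rpow_mul (by norm_num)]
          norm_num
      _ ≤ (x ^ 2 + s) ^ (-(3 / 2) : ℝ) :=
          Real.rpow_le_rpow_of_nonpos (by positivity)
            (hab x (Icc_subset_uIcc (Ioo_subset_Icc_self hx))) (by norm_num)
  have hcont : Continuous fun x => x / √(x ^ 2 + s) :=
    continuous_iff_continuousAt.2 fun x => (hasDerivAt_div_sqrt_sq_add hs x).continuousAt
  have hmono := (convex_Icc a b).mul_sub_le_image_sub_of_le_deriv hcont.continuousOn
    (fun x _ => (hasDerivAt_div_sqrt_sq_add hs x).differentiableAt.differentiableWithinAt)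
    hderiv a (left_mem_Icc.2 hle) b (right_mem_Icc.2 hle) hle
  rw [abs_sub_comm, abs_of_nonneg (sub_nonneg.2 hle), abs_sub_comm,
    abs_of_nonneg ((by positivity : 0 ≤ s / 8 * (b - a)).trans hmono)]
  exact hmono

theorem iteratedDeriv_comp_sub_const_sub {𝕜 F : Type*} [NontriviallyNormedField 𝕜]
    [NormedAddCommGroup F] [NormedSpace 𝕜 F] {n : ℕ} {f : 𝕜 → F} (hf : ContDiff 𝕜 n f)
    (p q u : 𝕜) :
    iteratedDeriv n (fun v => f (v - p) - f (v - q)) u =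
      iteratedDeriv n f (u - p) - iteratedDeriv n f (u - q) := by
  have hshift (c : 𝕜) : ContDiffAt 𝕜 n (fun v => f (v - c)) u :=
    (hf.comp (contDiff_id.sub contDiff_const)).contDiffAt
  rw [iteratedDeriv_fun_sub (hshift p) (hshift q), iteratedDeriv_comp_sub_const,
    iteratedDeriv_comp_sub_const]

theorem phase_derivative_estimates_general (k : ℕ) :
    ∃ c > (0:ℝ), ∀ m : ℕ, 1 ≤ m → ∃ C > (0:ℝ),
      ∀ (r t z₁ u₁ : ℝ) (u' : EuclideanSpace ℝ (Fin (k - 1))),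
        0 < r → r ≤ 1 → r ≤ t → t ≤ 2 * r →
        |z₁ - 1| ≤ 1 / 2 → z₁ ≠ 1 →
        1 / 2 ≤ Real.sqrt ((u₁ - 1) ^ 2 + ‖u'‖ ^ 2 + t ^ 2) →
        Real.sqrt ((u₁ - 1) ^ 2 + ‖u'‖ ^ 2 + t ^ 2) ≤ 2 →
        1 / 2 ≤ Real.sqrt ((u₁ - z₁) ^ 2 + ‖u'‖ ^ 2 + t ^ 2) →
        Real.sqrt ((u₁ - z₁) ^ 2 + ‖u'‖ ^ 2 + t ^ 2) ≤ 2 →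
        c * ((r ^ 2 + ‖u'‖ ^ 2) * |1 - z₁|) ≤
          |deriv (fun v : ℝ => Real.sqrt ((v - 1) ^ 2 + ‖u'‖ ^ 2 + t ^ 2) -
            Real.sqrt ((v - z₁) ^ 2 + ‖u'‖ ^ 2 + t ^ 2)) u₁| ∧
        |iteratedDeriv m (fun v : ℝ => Real.sqrt ((v - 1) ^ 2 + ‖u'‖ ^ 2 + t ^ 2) -
            Real.sqrt ((v - z₁) ^ 2 + ‖u'‖ ^ 2 + t ^ 2)) u₁| ≤
          C * ((r ^ 2 + ‖u'‖ ^ 2) * |1 - z₁|) := by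
  refine ⟨1 / 8, by norm_num, fun m hm => ?_⟩
  obtain ⟨n, rfl⟩ : ∃ n, m = n + 1 := ⟨m - 1, by omega⟩
  obtain ⟨K, hK⟩ := exists_abs_iteratedDeriv_sqrt_sq_add_sub_le n (δ := 3 / 16) (Λ := 4)
    (by norm_num)
  refine ⟨4 * max K 1, mul_pos four_pos (lt_max_of_lt_right one_pos), ?_⟩
  intro r t z₁ u₁ u' hr _ hrt ht2r hz _ ha₁ ha₂ hb₁ hb₂
  simp only [add_assoc] at ha₁ ha₂ hb₁ hb₂ ⊢
  set s := ‖u'‖ ^ 2 + t ^ 2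
  have hs : 0 < s := by have := hr.trans_le hrt; positivity
  have hs_ge : r ^ 2 + ‖u'‖ ^ 2 ≤ s := by nlinarith
  have hs_le : s ≤ 4 * (r ^ 2 + ‖u'‖ ^ 2) := by nlinarith
  rw [Real.le_sqrt (by norm_num) (by positivity)] at ha₁ hb₁
  rw [Real.sqrt_le_left (by norm_num)] at ha₂ hb₂
  have hab : |(u₁ - 1) - (u₁ - z₁)| = |1 - z₁| := by rw [sub_sub_sub_cancel_left, abs_sub_comm]
  have hregion : ∀ x ∈ uIcc (u₁ - 1) (u₁ - z₁), 3 / 16 ≤ x ^ 2 + s ∧ x ^ 2 + s ≤ 4 :=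
    fun x hx => ⟨le_sq_add_of_mem_uIcc hx (by linarith) (by linarith)
      (by rw [hab, abs_sub_comm]; exact hz), sq_add_le_of_mem_uIcc hx (by linarith) (by linarith)⟩
  rw [← iteratedDeriv_one, iteratedDeriv_comp_sub_const_sub (contDiff_sqrt_sq_add hs),
    iteratedDeriv_comp_sub_const_sub (contDiff_sqrt_sq_add hs), iteratedDeriv_one,
    (hasDerivAt_sqrt_sq_add hs _).deriv, (hasDerivAt_sqrt_sq_add hs _).deriv]
  constructor
  · calc 1 / 8 * ((r ^ 2 + ‖u'‖ ^ 2) * |1 - z₁|) ≤ s / 8 * |(u₁ - 1) - (u₁ - z₁)| := by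
          rw [hab]
          nlinarith [mul_le_mul_of_nonneg_right hs_ge (abs_nonneg (1 - z₁))]
      _ ≤ _ := mul_abs_sub_le_abs_div_sqrt_sq_add_sub hs fun x hx => (hregion x hx).2
  · calc _ ≤ K * s * |(u₁ - 1) - (u₁ - z₁)| := hK s _ _ hs hregion
      _ ≤ max K 1 * (4 * (r ^ 2 + ‖u'‖ ^ 2)) * |1 - z₁| := by
          rw [hab]; gcongr
          exact le_max_left K 1
      _ = 4 * max K 1 * ((r ^ 2 + ‖u'‖ ^ 2) * |1 - z₁|) := by ring

/-- Phase derivative estimates for the Euclidean model oscillatory integral: with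
`φ(u₁) = √((u₁-1)² + |u'|² + t²) − √((u₁-z₁)² + |u'|² + t²)`, `t ≈ r`, `z₁ ∼ 1`, `z₁ ≠ 1`,
on the region where both square roots are `≈ 1`:
`|∂_{u₁}φ| ≳ (r² + |u'|²)|1 - z₁|` and `|∂_{u₁}^m φ| ≲ (r² + |u'|²)|1 - z₁|` for `m ≥ 1`. -/
theorem phase_derivative_estimates (k : ℕ) (hk : 1 ≤ k) :
    ∃ c > (0:ℝ), ∀ m : ℕ, 1 ≤ m → ∃ C > (0:ℝ),
      ∀ (r t z₁ u₁ : ℝ) (u' : EuclideanSpace ℝ (Fin (k - 1))),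
        0 < r → r ≤ 1 → r ≤ t → t ≤ 2 * r →
        |z₁ - 1| ≤ 1 / 2 → z₁ ≠ 1 →
        1 / 2 ≤ Real.sqrt ((u₁ - 1) ^ 2 + ‖u'‖ ^ 2 + t ^ 2) →
        Real.sqrt ((u₁ - 1) ^ 2 + ‖u'‖ ^ 2 + t ^ 2) ≤ 2 →
        1 / 2 ≤ Real.sqrt ((u₁ - z₁) ^ 2 + ‖u'‖ ^ 2 + t ^ 2) →
        Real.sqrt ((u₁ - z₁) ^ 2 + ‖u'‖ ^ 2 + t ^ 2) ≤ 2 →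
        c * ((r ^ 2 + ‖u'‖ ^ 2) * |1 - z₁|) ≤
          |deriv (fun v : ℝ => Real.sqrt ((v - 1) ^ 2 + ‖u'‖ ^ 2 + t ^ 2) -
            Real.sqrt ((v - z₁) ^ 2 + ‖u'‖ ^ 2 + t ^ 2)) u₁| ∧
        |iteratedDeriv m (fun v : ℝ => Real.sqrt ((v - 1) ^ 2 + ‖u'‖ ^ 2 + t ^ 2) -
            Real.sqrt ((v - z₁) ^ 2 + ‖u'‖ ^ 2 + t ^ 2)) u₁| ≤
          C * ((r ^ 2 + ‖u'‖ ^ 2) * |1 - z₁|) :=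
  phase_derivative_estimates_general k
end

section
/- Let t, t' > 0 with t ≠ t', and y, z ∈ ℝ^k with y ≠ z or t ≠ t'. Define φ(u) = √(|u − y|² + t²) − √(|u − z|² + t'²) for u ∈ ℝ^k. Then ∇φ(u) = 0 has the unique solution u_c = (tz − t'y)/(t − t') = y + t(z − y)/(t − t'), and the Hessian at u_c equals (1/t − 1/t')(1 + β²)^{-1/2} · diag((1 + β²)^{-1}, 1, …, 1) in suitable orthonormal coordinates, where β = |y − z|/|t − t'|. -/
/-!
The gradient of `u ↦ √(‖u - c‖² + s²)` is the image of `s⁻¹ • (u - c)` under the injective map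
`x ↦ (1 + ‖x‖²)^(-1/2) • x` of the space onto its unit ball, so `∇φ(u) = 0` exactly when
`t⁻¹ • (u - y) = t'⁻¹ • (u - z)`, a linear equation whose unique solution is `u_c`.
At `u_c` the two offsets are `t • p` and `t' • p` with `p = (t - t')⁻¹ • (z - y)`, and the Hessian
of each square root there is `s⁻¹` times one and the same quadratic form
`R⁻¹ ‖v‖² - R⁻³ ⟪p, v⟫²`, `R = √(1 + ‖p‖²)`, which produces the factor `1/t - 1/t'`.
-/

open scoped RealInnerProductSpace

section StationaryPoint

variable {V : Type*} [AddCommGroup V] [Module ℝ V] {t t' : ℝ} (y z : V)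

lemma add_div_sub_smul_sub_eq (htne : t ≠ t') :
    y + (t / (t - t')) • (z - y) = (t - t')⁻¹ • (t • z - t' • y) := by
  have hd : t - t' ≠ 0 := sub_ne_zero.2 htne
  rw [eq_inv_smul_iff₀ hd, smul_add, smul_smul, mul_div_cancel₀ _ hd]
  module

lemma inv_smul_sub_eq_inv_smul_sub_iff (ht : t ≠ 0) (ht' : t' ≠ 0) (htne : t ≠ t') (u : V) :
    t⁻¹ • (u - y) = t'⁻¹ • (u - z) ↔ u = y + (t / (t - t')) • (z - y) := by
  rw [add_div_sub_smul_sub_eq y z htne, eq_inv_smul_iff₀ (sub_ne_zero.2 htne), inv_smul_eq_iff₀ ht,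
    ← smul_right_inj ht', smul_comm t t'⁻¹, smul_inv_smul₀ ht']
  constructor <;> intro h <;> linear_combination (norm := module) -h

end StationaryPoint

section LiftedDist

variable {E : Type*} [NormedAddCommGroup E]

/-- The Euclidean distance from `(u, 0)` to `(c, s)` in `E × ℝ`. -/
noncomputable def liftedDist (c : E) (s : ℝ) (u : E) : ℝ :=
  √(‖u - c‖ ^ 2 + s ^ 2)

variable {c : E} {s : ℝ}

lemma liftedDist_pos (hs : s ≠ 0) (u : E) : 0 < liftedDist c s u :=
  Real.sqrt_pos.2 (by positivity)

variable [InnerProductSpace ℝ E]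

lemma liftedDist_add_smul (hs : 0 < s) (p : E) :
    liftedDist c s (c + s • p) = s * √(1 + ‖p‖ ^ 2) := by
  calc √(‖c + s • p - c‖ ^ 2 + s ^ 2) = √(s ^ 2 * (1 + ‖p‖ ^ 2)) := by
        rw [add_sub_cancel_left, norm_smul, Real.norm_eq_abs, abs_of_pos hs]; ring_nf
    _ = s * √(1 + ‖p‖ ^ 2) := by rw [Real.sqrt_mul (sq_nonneg s), Real.sqrt_sq hs.le]

lemma contDiff_liftedDist (hs : s ≠ 0) {n : WithTop ℕ∞} : ContDiff ℝ n (liftedDist c s) :=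
  (((contDiff_norm_sq ℝ).comp (contDiff_id.sub contDiff_const)).add contDiff_const).sqrt
    fun u => (Real.sqrt_pos.1 (liftedDist_pos (c := c) hs u)).ne'

lemma hasFDerivAt_liftedDist (hs : s ≠ 0) (u : E) :
    HasFDerivAt (liftedDist c s) ((liftedDist c s u)⁻¹ • innerSL ℝ (u - c)) u := by
  have h := ((((hasFDerivAt_id u).sub_const c).norm_sq).add_const (s ^ 2)).sqrt
    (by positivity)
  refine h.congr_fderiv ?_
  ext v
  simp only [id_eq, one_div, mul_inv_rev, map_sub, ContinuousLinearMap.comp_id,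
    smul_apply, sub_apply, coe_innerSL_apply,
    nsmul_eq_mul, Nat.cast_ofNat, smul_eq_mul, liftedDist]
  ring

lemma hasGradientAt_liftedDist [CompleteSpace E] (hs : s ≠ 0) (u : E) :
    HasGradientAt (liftedDist c s) ((liftedDist c s u)⁻¹ • (u - c)) u := by
  rw [hasGradientAt_iff_hasFDerivAt]
  refine (hasFDerivAt_liftedDist hs u).congr_fderiv ?_
  ext v
  simp

lemma iteratedFDeriv_two_liftedDist (hs : s ≠ 0) (u v w : E) :
    iteratedFDeriv ℝ 2 (liftedDist c s) u ![v, w] =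
      (liftedDist c s u)⁻¹ * ⟪v, w⟫ -
        (liftedDist c s u ^ 3)⁻¹ * (⟪u - c, v⟫ * ⟪u - c, w⟫) := by
  have hd := liftedDist_pos (c := c) hs u
  -- `innerSL ℝ` is typed as conjugate-linear; seen as ℝ-bilinear it has `hasFDerivAt`.
  let B : E →L[ℝ] E →L[ℝ] ℝ := innerSL ℝ
  have hB (x y : E) : B x y = ⟪x, y⟫ := rfl
  have hderiv : HasFDerivAt (fun u => (liftedDist c s u)⁻¹ • B (u - c))
      ((liftedDist c s u)⁻¹ • B + (-(liftedDist c s u ^ 2)⁻¹ •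
        ((liftedDist c s u)⁻¹ • B (u - c))).smulRight (B (u - c))) u :=
    ((hasDerivAt_inv hd.ne').comp_hasFDerivAt u (hasFDerivAt_liftedDist hs u)).smul
      (B.hasFDerivAt.comp u ((hasFDerivAt_id u).sub_const c))
  rw [iteratedFDeriv_two_apply,
    funext fun u => (hasFDerivAt_liftedDist (c := c) hs u).fderiv, hderiv.fderiv]
  simp only [Matrix.cons_val_zero, Matrix.cons_val_one, Matrix.cons_val_fin_one, add_apply,
    smul_apply, ContinuousLinearMap.smulRight_apply, smul_eq_mul, hB]
  field_simp
  ring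

lemma iteratedFDeriv_two_liftedDist_add_smul (hs : 0 < s) (p v : E) :
    iteratedFDeriv ℝ 2 (liftedDist c s) (c + s • p) ![v, v] =
      s⁻¹ * ((√(1 + ‖p‖ ^ 2))⁻¹ * ‖v‖ ^ 2 - (√(1 + ‖p‖ ^ 2) ^ 3)⁻¹ * ⟪p, v⟫ ^ 2) := by
  have hR : 0 < √(1 + ‖p‖ ^ 2) := Real.sqrt_pos.2 (by positivity)
  rw [iteratedFDeriv_two_liftedDist hs.ne', liftedDist_add_smul hs, add_sub_cancel_left,
    real_inner_self_eq_norm_sq, real_inner_smul_left]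
  field_simp

lemma inv_liftedDist_smul_sub (hs : 0 < s) (u : E) :
    (liftedDist c s u)⁻¹ • (u - c) = OpenPartialHomeomorph.univUnitBall (s⁻¹ • (u - c)) := by
  set p := s⁻¹ • (u - c)
  have hu : u = c + s • p := by
    rw [smul_smul, mul_inv_cancel₀ hs.ne', one_smul, add_sub_cancel]
  conv_lhs => rw [hu, liftedDist_add_smul hs, add_sub_cancel_left]
  rw [OpenPartialHomeomorph.univUnitBall_apply, smul_smul, mul_inv_rev, mul_assoc,
    inv_mul_cancel₀ hs.ne', mul_one]

lemma gradient_sub_liftedDist [CompleteSpace E] {t t' : ℝ} (y z : E) (ht : t ≠ 0) (ht' : t' ≠ 0)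
    (u : E) :
    gradient (fun u => liftedDist y t u - liftedDist z t' u) u =
      (liftedDist y t u)⁻¹ • (u - y) - (liftedDist z t' u)⁻¹ • (u - z) := by
  refine HasGradientAt.gradient ?_
  rw [hasGradientAt_iff_hasFDerivAt, map_sub]
  exact (hasGradientAt_iff_hasFDerivAt.1 (hasGradientAt_liftedDist ht u)).sub
    (hasGradientAt_iff_hasFDerivAt.1 (hasGradientAt_liftedDist ht' u))

lemma gradient_sub_liftedDist_eq_zero_iff [CompleteSpace E] {t t' : ℝ} (y z : E) (ht : 0 < t)
    (ht' : 0 < t') (u : E) :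
    gradient (fun u => liftedDist y t u - liftedDist z t' u) u = 0 ↔
      t⁻¹ • (u - y) = t'⁻¹ • (u - z) := by
  rw [gradient_sub_liftedDist y z ht.ne' ht'.ne', sub_eq_zero, inv_liftedDist_smul_sub ht,
    inv_liftedDist_smul_sub ht']
  exact OpenPartialHomeomorph.univUnitBall.injOn.eq_iff trivial trivial

lemma inv_sqrt_mul_sub_inv_sqrt_pow_three_mul (p v : E) :
    (√(1 + ‖p‖ ^ 2))⁻¹ * ‖v‖ ^ 2 - (√(1 + ‖p‖ ^ 2) ^ 3)⁻¹ * ⟪p, v⟫ ^ 2 =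
      (1 + ‖p‖ ^ 2) ^ (-(1 : ℝ) / 2) *
        (‖v‖ ^ 2 - ‖p‖ ^ 2 / (1 + ‖p‖ ^ 2) * (⟪v, p⟫ / ‖p‖) ^ 2) := by
  have hq : 0 < 1 + ‖p‖ ^ 2 := by positivity
  have hR : √(1 + ‖p‖ ^ 2) ^ 2 = 1 + ‖p‖ ^ 2 := Real.sq_sqrt hq.le
  rw [neg_div, Real.rpow_neg hq.le, ← Real.sqrt_eq_rpow, real_inner_comm]
  set R := √(1 + ‖p‖ ^ 2)
  rcases eq_or_ne p 0 with rfl | hp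
  · simp
  · have hp' : ‖p‖ ≠ 0 := norm_ne_zero_iff.2 hp
    have hR0 : 0 < R := Real.sqrt_pos.2 hq
    rw [← hR]
    field_simp

lemma sq_inner_smul_div_norm_smul {a : ℝ} (ha : a ≠ 0) (v w : E) :
    (⟪v, a • w⟫ / ‖a • w‖) ^ 2 = (⟪v, w⟫ / ‖w‖) ^ 2 := by
  rw [real_inner_smul_right, norm_smul, Real.norm_eq_abs, div_pow, div_pow, mul_pow, mul_pow,
    sq_abs, mul_div_mul_left _ _ (pow_ne_zero 2 ha)]

lemma iteratedFDeriv_two_sub_liftedDist_stationary {t t' : ℝ} (y z : E) (ht : 0 < t) (ht' : 0 < t')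
    (htne : t ≠ t') (v : E) :
    iteratedFDeriv ℝ 2 (fun u => liftedDist y t u - liftedDist z t' u)
        (y + (t / (t - t')) • (z - y)) ![v, v] =
      (1 / t - 1 / t') * (1 + (‖y - z‖ / |t - t'|) ^ 2) ^ (-(1 : ℝ) / 2) *
        (‖v‖ ^ 2 - ((‖y - z‖ / |t - t'|) ^ 2 / (1 + (‖y - z‖ / |t - t'|) ^ 2)) *
          (⟪v, z - y⟫ / ‖z - y‖) ^ 2) := by
  have hd : t - t' ≠ 0 := sub_ne_zero.2 htne
  set p := (t - t')⁻¹ • (z - y) with hp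
  have hy : y + (t / (t - t')) • (z - y) = y + t • p := by rw [smul_smul, div_eq_mul_inv]
  have hz : y + (t / (t - t')) • (z - y) = z + t' • p := by
    rw [hy, ← sub_add_cancel t t', add_smul, smul_inv_smul₀ hd]
    abel
  have hβ : ‖y - z‖ / |t - t'| = ‖p‖ := by
    rw [norm_smul, norm_inv, Real.norm_eq_abs, norm_sub_rev, inv_mul_eq_div]
  have hy2 := iteratedFDeriv_two_liftedDist_add_smul (c := y) ht p v
  have hz2 := iteratedFDeriv_two_liftedDist_add_smul (c := z) ht' p v
  rw [← hy] at hy2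
  rw [← hz] at hz2
  rw [show (fun u => liftedDist y t u - liftedDist z t' u) = liftedDist y t - liftedDist z t'
      from rfl, iteratedFDeriv_sub_apply (contDiff_liftedDist ht.ne').contDiffAt
      (contDiff_liftedDist ht'.ne').contDiffAt, sub_apply, hy2, hz2, hβ,
    ← sq_inner_smul_div_norm_smul (inv_ne_zero hd), ← hp, mul_assoc,
    ← inv_sqrt_mul_sub_inv_sqrt_pow_three_mul]
  ring

end LiftedDist

theorem stationary_phase_distance_kernel_general (k : ℕ) (t t' : ℝ)
    (ht : 0 < t) (ht' : 0 < t') (htne : t ≠ t')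
    (y z : EuclideanSpace ℝ (Fin k)) :
    letI φ : EuclideanSpace ℝ (Fin k) → ℝ := fun u =>
      Real.sqrt (‖u - y‖ ^ 2 + t ^ 2) - Real.sqrt (‖u - z‖ ^ 2 + t' ^ 2)
    letI uc : EuclideanSpace ℝ (Fin k) := y + (t / (t - t')) • (z - y)
    letI β : ℝ := ‖y - z‖ / |t - t'|
    uc = (t - t')⁻¹ • (t • z - t' • y) ∧
    (∀ u, gradient φ u = 0 ↔ u = uc) ∧
    (∀ v : EuclideanSpace ℝ (Fin k),
      iteratedFDeriv ℝ 2 φ uc ![v, v] =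
        (1 / t - 1 / t') * (1 + β ^ 2) ^ (-(1:ℝ) / 2) *
          (‖v‖ ^ 2 - (β ^ 2 / (1 + β ^ 2)) * (⟪v, z - y⟫ / ‖z - y‖) ^ 2)) :=
  ⟨add_div_sub_smul_sub_eq y z htne,
    fun u => (gradient_sub_liftedDist_eq_zero_iff y z ht ht' u).trans
      (inv_smul_sub_eq_inv_smul_sub_iff y z ht.ne' ht'.ne' htne u),
    iteratedFDeriv_two_sub_liftedDist_stationary y z ht ht' htne⟩

/-- Stationary phase analysis for `φ(u) = √(|u−y|²+t²) − √(|u−z|²+t'²)`: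
`∇φ` vanishes exactly at `u_c = y + (t/(t−t'))(z−y) = (t−t')⁻¹(tz − t'y)`, and the
Hessian at `u_c` is `(1/t − 1/t')(1+β²)^{-1/2} diag((1+β²)^{-1}, 1, …, 1)` with the first
axis along `z − y`, where `β = |y−z|/|t−t'|`. -/
theorem stationary_phase_distance_kernel (k : ℕ) (hk : 1 ≤ k) (t t' : ℝ)
    (ht : 0 < t) (ht' : 0 < t') (htne : t ≠ t')
    (y z : EuclideanSpace ℝ (Fin k)) (hyz : y ≠ z ∨ t ≠ t') :
    letI φ : EuclideanSpace ℝ (Fin k) → ℝ := fun u =>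
      Real.sqrt (‖u - y‖ ^ 2 + t ^ 2) - Real.sqrt (‖u - z‖ ^ 2 + t' ^ 2)
    letI uc : EuclideanSpace ℝ (Fin k) := y + (t / (t - t')) • (z - y)
    letI β : ℝ := ‖y - z‖ / |t - t'|
    uc = (t - t')⁻¹ • (t • z - t' • y) ∧
    (∀ u, gradient φ u = 0 ↔ u = uc) ∧
    (∀ v : EuclideanSpace ℝ (Fin k),
      iteratedFDeriv ℝ 2 φ uc ![v, v] =
        (1 / t - 1 / t') * (1 + β ^ 2) ^ (-(1:ℝ) / 2) *
          (‖v‖ ^ 2 - (β ^ 2 / (1 + β ^ 2)) * (⟪v, z - y⟫ / ‖z - y‖) ^ 2)) :=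
  stationary_phase_distance_kernel_general k t t' ht ht' htne y z
end

section
/- Knapp lower bound: Let k ≤ n and let T_λ f(x) = ∫_{ℝ^k} e^{iλ√(|u−y|²+|x'|²)} a(x,y) f(y) dy with x = (u, x') ∈ ℝ^k × ℝ^{n-k}, where a is a nonnegative smooth bump supported near {y ∼ 0, x ∼ e_n} with a ≥ c > 0 on a fixed neighborhood. Then for all 1 ≤ p, q ≤ ∞, the operator norm satisfies ‖T_λ‖_{L^p(ℝ^k) → L^q(ℝ^n)} ≳ λ^{-(k/2)(1/p' + 1/q)}, where 1/p' = 1 − 1/p. -/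
open MeasureTheory ENNReal
lemma aux_min_le_rpow {x e : ℝ} (hx : 0 < x) (he0 : 0 ≤ e) (he2 : e ≤ 2) :
    min 1 (x ^ 2) ≤ x ^ e := by
  rcases le_total x 1 with h | h
  · calc min 1 (x ^ 2) ≤ x ^ 2 := min_le_right _ _
      _ = x ^ (2 : ℝ) := by rw [← Real.rpow_natCast x 2]; norm_num
      _ ≤ x ^ e := Real.rpow_le_rpow_of_exponent_ge hx h he2
  · calc min 1 (x ^ 2) ≤ 1 := min_le_left _ _
      _ ≤ x ^ e := Real.one_le_rpow h he0

lemma aux_vol_ball (k : ℕ) {r : ℝ} (hr : 0 < r) :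
    volume (Metric.ball (0 : EuclideanSpace ℝ (Fin k)) r)
      = ENNReal.ofReal (r ^ k) * volume (Metric.ball (0 : EuclideanSpace ℝ (Fin k)) 1) := by
  rcases Nat.eq_zero_or_pos k with hk | hk
  · subst hk
    haveI : Subsingleton (EuclideanSpace ℝ (Fin 0)) :=
      ⟨fun a b => by ext i; exact Fin.elim0 i⟩
    have h1 : ∀ ρ : ℝ, 0 < ρ → Metric.ball (0 : EuclideanSpace ℝ (Fin 0)) ρ = Set.univ := by
      intro ρ hρ
      ext x
      simp [Metric.mem_ball, show x = 0 from Subsingleton.elim x 0, hρ]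
    rw [h1 r hr, h1 1 one_pos]
    simp
  · haveI : Nontrivial (EuclideanSpace ℝ (Fin k)) := by
      refine ⟨EuclideanSpace.single ⟨0, hk⟩ (1 : ℝ), 0, fun h => ?_⟩
      have h2 := congrArg norm h
      simp [EuclideanSpace.norm_single] at h2
    rw [Measure.addHaar_ball volume 0 hr.le, finrank_euclideanSpace_fin]

lemma aux_cos_phase {lam s t : ℝ} (hlam : 1 ≤ lam) (hs0 : 0 ≤ s)
    (hs : s ≤ 1 / (50 * Real.sqrt lam)) (ht : 99 / 100 ≤ t) :
    (1 : ℝ) / 2 ≤ Real.cos (lam * Real.sqrt (s ^ 2 + t ^ 2) - lam * t) := by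
  have hl0 : (0 : ℝ) < lam := by linarith
  have hsq : Real.sqrt lam ^ 2 = lam := Real.sq_sqrt hl0.le
  have hsl : 1 ≤ Real.sqrt lam := by nlinarith [Real.sqrt_nonneg lam]
  have ht0 : (0 : ℝ) ≤ t := by linarith
  have hlow : t ≤ Real.sqrt (s ^ 2 + t ^ 2) := by
    nlinarith [Real.sq_sqrt (show (0:ℝ) ≤ s ^ 2 + t ^ 2 by positivity),
      Real.sqrt_nonneg (s ^ 2 + t ^ 2)]
  have hupp : Real.sqrt (s ^ 2 + t ^ 2) ≤ t + s ^ 2 := by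
    have h2 : Real.sqrt (s ^ 2 + t ^ 2) ≤ Real.sqrt ((t + s ^ 2) ^ 2) :=
      Real.sqrt_le_sqrt (by nlinarith)
    rwa [Real.sqrt_sq (by positivity)] at h2
  have hs2 : s ^ 2 ≤ 1 / (2500 * lam) := by
    have h1 : s * s ≤ (1 / (50 * Real.sqrt lam)) * (1 / (50 * Real.sqrt lam)) :=
      mul_le_mul hs hs hs0 (by positivity)
    have h2 : (1 / (50 * Real.sqrt lam)) * (1 / (50 * Real.sqrt lam)) = 1 / (2500 * lam) := by
      rw [div_mul_div_comm, one_mul]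
      congr 1
      nlinarith
    calc s ^ 2 = s * s := sq s
      _ ≤ 1 / (2500 * lam) := by rw [← h2]; exact h1
  set θ := lam * Real.sqrt (s ^ 2 + t ^ 2) - lam * t with hθ
  have hθ0 : 0 ≤ θ := by nlinarith
  have hθ1 : θ ≤ 1 / 10 := by
    have h1 : θ ≤ lam * s ^ 2 := by nlinarith
    have h2 : lam * s ^ 2 ≤ lam * (1 / (2500 * lam)) := by nlinarith
    have h3 : lam * (1 / (2500 * lam)) = 1 / 2500 := by field_simp
    linarith
  nlinarith [Real.one_sub_sq_div_two_le_cos (x := θ)]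

/-- Knapp-type lower bound for the Euclidean model oscillatory integral operator
`T_λ f(x) = ∫_{ℝ^k} e^{iλ√(|u−y|²+|x'|²)} a(x,y) f(y) dy`, `x = (u,x') ∈ ℝ^k × ℝ^{n−k}`,
where `a` is a nonnegative smooth bump supported near `{y ∼ 0, x ∼ e_n}` and bounded below
by `c₀ > 0` on a fixed neighborhood: for all `1 ≤ p, q ≤ ∞`,
`‖T_λ‖_{L^p(ℝ^k) → L^q(ℝ^n)} ≳ λ^{-(k/2)(1/p' + 1/q)}`. -/
theorem knapp_lower_bound (n k : ℕ) (hk : k < n) (p q : ℝ≥0∞) (hp : 1 ≤ p) (hq : 1 ≤ q)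
    (a : (EuclideanSpace ℝ (Fin k) × EuclideanSpace ℝ (Fin (n - k))) →
      EuclideanSpace ℝ (Fin k) → ℝ)
    (ha_smooth : ContDiff ℝ (⊤ : ℕ∞) (fun z : (EuclideanSpace ℝ (Fin k) ×
      EuclideanSpace ℝ (Fin (n - k))) × EuclideanSpace ℝ (Fin k) => a z.1 z.2))
    (ha_nonneg : ∀ x y, 0 ≤ a x y)
    (ha_supp : ∀ x y, a x y ≠ 0 → ‖y‖ ≤ 1 / 10 ∧ ‖x.1‖ ≤ 1 / 10 ∧
      ‖x.2 - EuclideanSpace.single (⟨n - k - 1, by omega⟩ : Fin (n - k)) 1‖ ≤ 1 / 10)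
    (c₀ : ℝ) (hc₀ : 0 < c₀)
    (ha_lower : ∀ x y, ‖y‖ ≤ 1 / 20 → ‖x.1‖ ≤ 1 / 20 →
      ‖x.2 - EuclideanSpace.single (⟨n - k - 1, by omega⟩ : Fin (n - k)) 1‖ ≤ 1 / 20 →
      c₀ ≤ a x y) :
    ∃ c > (0:ℝ), ∀ lam : ℝ, 1 ≤ lam →
      ∃ f : EuclideanSpace ℝ (Fin k) → ℂ,
        eLpNorm f p volume ≠ 0 ∧ eLpNorm f p volume ≠ ⊤ ∧
        ENNReal.ofReal
            (c * lam ^ (-((k:ℝ) / 2) * (((1:ℝ≥0∞) - 1 / p).toReal + (1 / q).toReal))) *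
            eLpNorm f p volume ≤
          eLpNorm (fun x : EuclideanSpace ℝ (Fin k) × EuclideanSpace ℝ (Fin (n - k)) =>
            ∫ y : EuclideanSpace ℝ (Fin k),
              Complex.exp (Complex.I * ((lam * Real.sqrt (‖x.1 - y‖ ^ 2 + ‖x.2‖ ^ 2) : ℝ) : ℂ)) *
                (a x y : ℂ) * f y) q volume := by
  classical
  set e₁ : EuclideanSpace ℝ (Fin (n - k)) :=
    EuclideanSpace.single (⟨n - k - 1, by omega⟩ : Fin (n - k)) 1 with he₁
  set V := (volume (Metric.ball (0 : EuclideanSpace ℝ (Fin k)) 1)).toReal with hVdef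
  have hV0 : 0 < V :=
    ENNReal.toReal_pos (Metric.measure_ball_pos volume 0 one_pos).ne' measure_ball_lt_top.ne
  set W := (volume (Metric.ball (0 : EuclideanSpace ℝ (Fin (n - k))) (1 / 100))).toReal with hWdef
  have hW0 : 0 < W :=
    ENNReal.toReal_pos (Metric.measure_ball_pos volume 0 (by norm_num)).ne' measure_ball_lt_top.ne
  set v' := V / 100 ^ k with hv'def
  have hv'0 : 0 < v' := by positivity
  refine ⟨c₀ / 2 * min 1 (v' ^ 2) * min 1 (W ^ 2), by positivity, ?_⟩
  intro lam hlam
  have hl0 : (0 : ℝ) < lam := by linarith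
  have hsq : Real.sqrt lam ^ 2 = lam := Real.sq_sqrt hl0.le
  have hsl1 : 1 ≤ Real.sqrt lam := by nlinarith [Real.sqrt_nonneg lam]
  set r := 1 / (100 * Real.sqrt lam) with hrdef
  have hr0 : 0 < r := by positivity
  have hr1 : r ≤ 1 / 100 := by
    rw [hrdef]
    apply one_div_le_one_div_of_le (by norm_num)
    nlinarith
  set B := Metric.ball (0 : EuclideanSpace ℝ (Fin k)) r with hBdef
  set b := r ^ k * V with hbdef
  have hb0 : 0 < b := by positivity
  have hvolB : volume B = ENNReal.ofReal b := by
    rw [hBdef, aux_vol_ball k hr0, hbdef, ENNReal.ofReal_mul (by positivity)]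
    congr 1
    rw [hVdef, ENNReal.ofReal_toReal measure_ball_lt_top.ne]
  have hB0 : volume B ≠ 0 := by rw [hvolB]; exact (ENNReal.ofReal_pos.mpr hb0).ne'
  have hBtop : volume B ≠ ⊤ := by rw [hvolB]; exact ENNReal.ofReal_ne_top
  set f : EuclideanSpace ℝ (Fin k) → ℂ := B.indicator (fun _ => 1) with hfdef
  have hp0 : p ≠ 0 := (zero_lt_one.trans_le hp).ne'
  have hq0 : q ≠ 0 := (zero_lt_one.trans_le hq).ne'
  have hfLp : eLpNorm f p volume = (ENNReal.ofReal b) ^ (p.toReal)⁻¹ := by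
    rw [hfdef, eLpNorm_indicator_const' measurableSet_ball hB0 hp0, hvolB, one_div]
    simp
  refine ⟨f, ?_, ?_, ?_⟩
  · rw [hfLp]
    exact (ENNReal.rpow_pos (ENNReal.ofReal_pos.mpr hb0) ENNReal.ofReal_ne_top).ne'
  · rw [hfLp]
    exact ENNReal.rpow_ne_top_of_nonneg (by positivity) ENNReal.ofReal_ne_top
  -- notation for exponents
  set γ := (p.toReal)⁻¹ with hγdef
  set β := (q.toReal)⁻¹ with hβdef
  have hγ0 : 0 ≤ γ := inv_nonneg.mpr ENNReal.toReal_nonneg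
  have hβ0 : 0 ≤ β := inv_nonneg.mpr ENNReal.toReal_nonneg
  have htoReal_le_one : ∀ s : ℝ≥0∞, 1 ≤ s → (s.toReal)⁻¹ ≤ 1 := by
    intro s hs
    rcases eq_or_ne s ⊤ with h | h
    · simp [h]
    · have h1 : 1 ≤ s.toReal := by simpa using ENNReal.toReal_mono h hs
      rw [← one_div, div_le_one (by linarith)]
      linarith
  have hγ1 : γ ≤ 1 := htoReal_le_one p hp
  have hβ1 : β ≤ 1 := htoReal_le_one q hq
  have hα : ((1 : ℝ≥0∞) - 1 / p).toReal = 1 - γ := by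
    rw [ENNReal.toReal_sub_of_le (by rw [one_div]; exact ENNReal.inv_le_one.mpr hp)
      ENNReal.one_ne_top, ENNReal.toReal_one, one_div, ENNReal.toReal_inv, hγdef]
  have hβq : ((1 : ℝ≥0∞) / q).toReal = β := by
    rw [one_div, ENNReal.toReal_inv, hβdef]
  -- the set E and constants
  set E := B ×ˢ Metric.ball e₁ (1 / 100) with hEdef
  have hEmeas : MeasurableSet E := measurableSet_ball.prod measurableSet_ball
  have hvolD : volume (Metric.ball e₁ (1 / 100)) = ENNReal.ofReal W := by
    rw [Measure.addHaar_ball_center, hWdef, ENNReal.ofReal_toReal measure_ball_lt_top.ne]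
  have hvolE : volume E = ENNReal.ofReal (b * W) := by
    rw [hEdef, Measure.volume_eq_prod, Measure.prod_prod, hvolB, hvolD,
      ← ENNReal.ofReal_mul hb0.le]
  set m := c₀ / 2 * b with hmdef
  have hm0 : 0 < m := by positivity
  -- pointwise lower bound on E
  have hpt : ∀ x : EuclideanSpace ℝ (Fin k) × EuclideanSpace ℝ (Fin (n - k)), x ∈ E →
      m ≤ ‖∫ y : EuclideanSpace ℝ (Fin k),
        Complex.exp (Complex.I * ((lam * Real.sqrt (‖x.1 - y‖ ^ 2 + ‖x.2‖ ^ 2) : ℝ) : ℂ)) *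
          (a x y : ℂ) * f y‖ := by
    intro x hx
    have hx1 : ‖x.1‖ < r := by
      have h := hx.1
      rwa [hBdef, mem_ball_zero_iff] at h
    have hx2 : ‖x.2 - e₁‖ < 1 / 100 := by
      have h := hx.2
      rwa [Metric.mem_ball, dist_eq_norm] at h
    have ht : 99 / 100 ≤ ‖x.2‖ := by
      have h1 : ‖e₁‖ = 1 := by rw [he₁, EuclideanSpace.norm_single]; norm_num
      have h2 : |‖x.2‖ - ‖e₁‖| ≤ ‖x.2 - e₁‖ := abs_norm_sub_norm_le _ _
      rw [h1] at h2
      have h3 := (abs_lt.mp (lt_of_le_of_lt h2 hx2)).1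
      linarith
    have ha_cont : Continuous fun y => a x y :=
      ha_smooth.continuous.comp (continuous_const.prodMk continuous_id)
    set K : EuclideanSpace ℝ (Fin k) → ℂ := fun y =>
      Complex.exp (Complex.I * ((lam * Real.sqrt (‖x.1 - y‖ ^ 2 + ‖x.2‖ ^ 2) : ℝ) : ℂ)) *
        (a x y : ℂ) with hKdef
    have hphase_cont : Continuous fun y : EuclideanSpace ℝ (Fin k) =>
        lam * Real.sqrt (‖x.1 - y‖ ^ 2 + ‖x.2‖ ^ 2) :=
      continuous_const.mul (Real.continuous_sqrt.comp
        (((continuous_const.sub continuous_id).norm.pow 2).add continuous_const))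
    have hKcont : Continuous K := by
      rw [hKdef]
      exact (Complex.continuous_exp.comp (continuous_const.mul
        (Complex.continuous_ofReal.comp hphase_cont))).mul
        (Complex.continuous_ofReal.comp ha_cont)
    have hgind : (fun y => Complex.exp (Complex.I *
        ((lam * Real.sqrt (‖x.1 - y‖ ^ 2 + ‖x.2‖ ^ 2) : ℝ) : ℂ)) * (a x y : ℂ) * f y)
        = B.indicator K := by
      funext y
      by_cases hy : y ∈ B
      · simp [hfdef, hKdef, Set.indicator_of_mem hy]
      · simp [hfdef, hKdef, Set.indicator_of_notMem hy]
    have hKint : Integrable (B.indicator K) volume :=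
      ((hKcont.locallyIntegrable.integrableOn_isCompact
        (isCompact_closedBall (0 : EuclideanSpace ℝ (Fin k)) r)).mono_set
        Metric.ball_subset_closedBall).integrable_indicator measurableSet_ball
    set w : ℂ := Complex.exp (-(Complex.I * ((lam * ‖x.2‖ : ℝ) : ℂ))) with hwdef
    have hw1 : ‖w‖ = 1 := by
      have h0 : (-(Complex.I * ((lam * ‖x.2‖ : ℝ) : ℂ))).re = 0 := by simp
      rw [hwdef, Complex.norm_exp, h0, Real.exp_zero]
    have hre : ∀ y, (w * K y).re =
        Real.cos (lam * Real.sqrt (‖x.1 - y‖ ^ 2 + ‖x.2‖ ^ 2) - lam * ‖x.2‖) * a x y := by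
      intro y
      have hexp : w * Complex.exp (Complex.I *
          ((lam * Real.sqrt (‖x.1 - y‖ ^ 2 + ‖x.2‖ ^ 2) : ℝ) : ℂ)) =
          Complex.exp (((lam * Real.sqrt (‖x.1 - y‖ ^ 2 + ‖x.2‖ ^ 2) - lam * ‖x.2‖ : ℝ) : ℂ)
            * Complex.I) := by
        rw [hwdef, ← Complex.exp_add]
        congr 1
        push_cast
        ring
      simp only [hKdef]
      rw [← mul_assoc, hexp, Complex.mul_re]
      simp only [Complex.exp_ofReal_mul_I_re, Complex.ofReal_re, Complex.ofReal_im,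
        mul_zero, sub_zero]
    have hcos_cont : Continuous fun y : EuclideanSpace ℝ (Fin k) =>
        Real.cos (lam * Real.sqrt (‖x.1 - y‖ ^ 2 + ‖x.2‖ ^ 2) - lam * ‖x.2‖) * a x y :=
      (Real.continuous_cos.comp (hphase_cont.sub continuous_const)).mul ha_cont
    have hint2 : IntegrableOn (fun y => Real.cos (lam * Real.sqrt (‖x.1 - y‖ ^ 2 + ‖x.2‖ ^ 2)
        - lam * ‖x.2‖) * a x y) B volume :=
      (hcos_cont.locallyIntegrable.integrableOn_isCompact
        (isCompact_closedBall (0 : EuclideanSpace ℝ (Fin k)) r)).mono_set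
        Metric.ball_subset_closedBall
    have hptwise : ∀ y ∈ B, c₀ / 2 ≤
        Real.cos (lam * Real.sqrt (‖x.1 - y‖ ^ 2 + ‖x.2‖ ^ 2) - lam * ‖x.2‖) * a x y := by
      intro y hy
      rw [hBdef, mem_ball_zero_iff] at hy
      have hsb : ‖x.1 - y‖ ≤ 1 / (50 * Real.sqrt lam) := by
        have h1 : ‖x.1 - y‖ ≤ ‖x.1‖ + ‖y‖ := norm_sub_le _ _
        have h2 : r + r = 1 / (50 * Real.sqrt lam) := by rw [hrdef]; ring
        linarith
      have hcos := aux_cos_phase hlam (norm_nonneg _) hsb ht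
      have halow := ha_lower x y (by linarith) (by linarith) (by linarith)
      calc c₀ / 2 = (1 / 2) * c₀ := by ring
        _ ≤ Real.cos (lam * Real.sqrt (‖x.1 - y‖ ^ 2 + ‖x.2‖ ^ 2) - lam * ‖x.2‖) * a x y :=
          mul_le_mul hcos halow hc₀.le (le_trans (by norm_num) hcos)
    have hfun2 : (fun y => (w * B.indicator K y).re)
        = B.indicator (fun y => Real.cos (lam * Real.sqrt (‖x.1 - y‖ ^ 2 + ‖x.2‖ ^ 2)
            - lam * ‖x.2‖) * a x y) := by
      funext y
      by_cases hy : y ∈ B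
      · rw [Set.indicator_of_mem hy, Set.indicator_of_mem hy, hre]
      · rw [Set.indicator_of_notMem hy, Set.indicator_of_notMem hy]
        simp
    calc m = c₀ / 2 * (volume B).toReal := by
          rw [hvolB, ENNReal.toReal_ofReal hb0.le, hmdef]
      _ ≤ ∫ y in B, Real.cos (lam * Real.sqrt (‖x.1 - y‖ ^ 2 + ‖x.2‖ ^ 2) - lam * ‖x.2‖)
            * a x y := by
            have := setIntegral_ge_of_const_le measurableSet_ball hBtop hptwise hint2
            rwa [smul_eq_mul, mul_comm, Measure.real] at this
      _ = ∫ y, (w * B.indicator K y).re := by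
          rw [hfun2, integral_indicator measurableSet_ball]
      _ = (∫ y, w * B.indicator K y).re := integral_re (hKint.const_mul w)
      _ = (w * ∫ y, B.indicator K y).re := by rw [integral_const_mul]
      _ ≤ ‖w * ∫ y, B.indicator K y‖ := by
          exact Complex.re_le_norm _
      _ = ‖∫ y, B.indicator K y‖ := by rw [norm_mul, hw1, one_mul]
      _ = ‖∫ y, Complex.exp (Complex.I *
            ((lam * Real.sqrt (‖x.1 - y‖ ^ 2 + ‖x.2‖ ^ 2) : ℝ) : ℂ)) * (a x y : ℂ) * f y‖ := by
          rw [hgind]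
  -- monotonicity step
  have hmono : eLpNorm (E.indicator fun _ => m) q volume ≤
      eLpNorm (fun x : EuclideanSpace ℝ (Fin k) × EuclideanSpace ℝ (Fin (n - k)) =>
        ∫ y : EuclideanSpace ℝ (Fin k),
          Complex.exp (Complex.I * ((lam * Real.sqrt (‖x.1 - y‖ ^ 2 + ‖x.2‖ ^ 2) : ℝ) : ℂ)) *
            (a x y : ℂ) * f y) q volume := by
    apply eLpNorm_mono
    intro x
    by_cases hx : x ∈ E
    · rw [Set.indicator_of_mem hx, Real.norm_eq_abs, abs_of_pos hm0]
      exact hpt x hx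
    · rw [Set.indicator_of_notMem hx]
      simp
  have hindq : eLpNorm (E.indicator fun _ => m) q volume =
      ENNReal.ofReal m * (ENNReal.ofReal (b * W)) ^ (q.toReal)⁻¹ := by
    rw [eLpNorm_indicator_const' hEmeas
      (by rw [hvolE]; exact (ENNReal.ofReal_pos.mpr (by positivity)).ne') hq0, hvolE,
      Real.enorm_eq_ofReal hm0.le, one_div]
  refine le_trans ?_ hmono
  rw [hindq, hfLp, hα, hβq]
  have hbL : b = lam ^ (-((k : ℝ) / 2)) * v' := by
    have h1 : Real.sqrt lam ^ k = lam ^ ((k : ℝ) / 2) := by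
      rw [show ((k : ℝ) / 2) = (1 / 2) * (k : ℝ) by ring, Real.rpow_mul hl0.le,
        ← Real.sqrt_eq_rpow, Real.rpow_natCast]
    have h2 : lam ^ (-((k : ℝ) / 2)) = (lam ^ ((k : ℝ) / 2))⁻¹ := Real.rpow_neg hl0.le _
    have h3 : (0 : ℝ) < lam ^ ((k : ℝ) / 2) := Real.rpow_pos_of_pos hl0 _
    rw [hbdef, hrdef, hv'def, div_pow, one_pow, mul_pow, h1, h2]
    field_simp
  set X := lam ^ (-((k : ℝ) / 2)) with hXdef
  have hX : 0 < X := Real.rpow_pos_of_pos hl0 _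
  have key : c₀ / 2 * min 1 (v' ^ 2) * min 1 (W ^ 2) * v' ^ γ
      ≤ c₀ / 2 * v' ^ (1 + β) * W ^ β := by
    have hA := aux_min_le_rpow hv'0 (show (0:ℝ) ≤ (1 - γ) + β by linarith) (by linarith)
    have hC := aux_min_le_rpow hW0 hβ0 (by linarith)
    have h2 : v' ^ ((1 - γ) + β) * v' ^ γ = v' ^ (1 + β) := by
      rw [← Real.rpow_add hv'0]; congr 1; ring
    calc c₀ / 2 * min 1 (v' ^ 2) * min 1 (W ^ 2) * v' ^ γ
        = c₀ / 2 * ((min 1 (v' ^ 2) * v' ^ γ) * min 1 (W ^ 2)) := by ring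
      _ ≤ c₀ / 2 * ((v' ^ ((1 - γ) + β) * v' ^ γ) * W ^ β) := by
          apply mul_le_mul_of_nonneg_left ?_ (by positivity)
          exact mul_le_mul (mul_le_mul_of_nonneg_right hA (by positivity)) hC
            (le_min zero_le_one (sq_nonneg _)) (by positivity)
      _ = c₀ / 2 * v' ^ (1 + β) * W ^ β := by rw [h2]; ring
  have hXcomb : X ^ ((1 - γ) + β) * X ^ γ = X * X ^ β := by
    rw [← Real.rpow_add hX, show (1 - γ) + β + γ = 1 + β by ring, Real.rpow_add hX,
      Real.rpow_one]
  have hv'comb : v' * v' ^ β = v' ^ (1 + β) := by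
    rw [Real.rpow_add hv'0, Real.rpow_one]
  have hreal : c₀ / 2 * min 1 (v' ^ 2) * min 1 (W ^ 2) * lam ^ (-((k : ℝ) / 2) * (1 - γ + β))
      * b ^ γ ≤ m * (b * W) ^ β := by
    calc c₀ / 2 * min 1 (v' ^ 2) * min 1 (W ^ 2) * lam ^ (-((k : ℝ) / 2) * (1 - γ + β)) * b ^ γ
        = (c₀ / 2 * min 1 (v' ^ 2) * min 1 (W ^ 2) * v' ^ γ) * (X ^ ((1 - γ) + β) * X ^ γ) := by
          rw [hbL, Real.rpow_mul hl0.le, ← hXdef, Real.mul_rpow hX.le hv'0.le,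
            show (1 : ℝ) - γ + β = (1 - γ) + β by ring]
          ring
      _ = (c₀ / 2 * min 1 (v' ^ 2) * min 1 (W ^ 2) * v' ^ γ) * (X * X ^ β) := by rw [hXcomb]
      _ ≤ (c₀ / 2 * v' ^ (1 + β) * W ^ β) * (X * X ^ β) :=
          mul_le_mul_of_nonneg_right key (by positivity)
      _ = m * (b * W) ^ β := by
          rw [hmdef, hbL, Real.mul_rpow (mul_nonneg hX.le hv'0.le) hW0.le,
            Real.mul_rpow hX.le hv'0.le, ← hv'comb]
          ring
  rw [ENNReal.ofReal_rpow_of_pos hb0, ENNReal.ofReal_rpow_of_pos (by positivity : (0:ℝ) < b * W),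
    ← ENNReal.ofReal_mul (by positivity), ← ENNReal.ofReal_mul hm0.le]
  exact ENNReal.ofReal_le_ofReal hreal
end

section
/- Gaussian beam lower bound: Let 1 ≤ k ≤ n and T_λ as above with a a nonnegative smooth bump supported near {x ∼ 0, y ∼ e₁} with a ≥ c > 0 on a fixed neighborhood. Then ‖T_λ‖_{L^p(ℝ^k) → L^q(ℝ^n)} ≳ λ^{-(k-1)/(2p') - (n-1)/(2q)}. -/
set_option maxHeartbeats 1000000
open MeasureTheory ENNReal

lemma hl_sqrt {d s : ℝ} (hd : 0.9 ≤ d) (hs : 0 ≤ s) :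
    |Real.sqrt (d^2 + s) - d| ≤ s := by
  have hd0 : (0:ℝ) ≤ d := by linarith
  have h1 : d ≤ Real.sqrt (d^2 + s) := by
    have := Real.sqrt_le_sqrt (show d^2 ≤ d^2 + s by linarith)
    rwa [Real.sqrt_sq hd0] at this
  have h2 : Real.sqrt (d^2 + s) ≤ d + s := by
    have := Real.sqrt_le_sqrt (show d^2 + s ≤ (d+s)^2 by nlinarith)
    rwa [Real.sqrt_sq (by linarith)] at this
  rw [abs_le]; constructor <;> linarith

lemma euclid_norm_sq {m : ℕ} (z : EuclideanSpace ℝ (Fin m)) :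
    ‖z‖^2 = ∑ i, (z i)^2 := by
  rw [EuclideanSpace.norm_eq, Real.sq_sqrt (by positivity)]
  simp [sq_abs]

lemma euclid_norm_le {m : ℕ} {z : EuclideanSpace ℝ (Fin m)} {C : ℝ} (hC : 0 ≤ C)
    (h : ∑ i, (z i)^2 ≤ C^2) : ‖z‖ ≤ C := by
  have h2 : ‖z‖^2 ≤ C^2 := by rw [euclid_norm_sq]; exact h
  nlinarith [norm_nonneg z]

lemma box_eq {m : ℕ} (c r : Fin m → ℝ) :
    {y : EuclideanSpace ℝ (Fin m) | ∀ i, y i ∈ Set.Ioo (c i - r i) (c i + r i)}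
      = (MeasurableEquiv.toLp 2 (Fin m → ℝ)).symm ⁻¹'
        (Set.univ.pi fun i => Set.Ioo (c i - r i) (c i + r i)) := by
  ext y
  simp [Set.mem_pi]

lemma volume_box {m : ℕ} (c r : Fin m → ℝ) (hr : ∀ i, 0 ≤ r i) :
    volume {y : EuclideanSpace ℝ (Fin m) | ∀ i, y i ∈ Set.Ioo (c i - r i) (c i + r i)}
      = ENNReal.ofReal (∏ i, (2 * r i)) := by
  rw [box_eq, MeasurePreserving.measure_preimage
    (EuclideanSpace.volume_preserving_symm_measurableEquiv_toLp _)
    ((MeasurableSet.univ_pi (fun i => measurableSet_Ioo)).nullMeasurableSet),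
    volume_pi_pi]
  simp only [Real.volume_Ioo]
  rw [← ENNReal.ofReal_prod_of_nonneg (fun i _ => by linarith [hr i])]
  congr 1; apply Finset.prod_congr rfl; intro i _; ring

lemma measurableSet_box {m : ℕ} (c r : Fin m → ℝ) :
    MeasurableSet {y : EuclideanSpace ℝ (Fin m) | ∀ i, y i ∈ Set.Ioo (c i - r i) (c i + r i)} := by
  rw [box_eq]
  exact (MeasurableSet.univ_pi (fun i => measurableSet_Ioo)).preimage
    (MeasurableEquiv.measurable _)

lemma bounded_box {m : ℕ} (c r : Fin m → ℝ) (hc : ∀ i, |c i| ≤ 1) (hr : ∀ i, r i ≤ 1) :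
    Bornology.IsBounded
      {y : EuclideanSpace ℝ (Fin m) | ∀ i, y i ∈ Set.Ioo (c i - r i) (c i + r i)} := by
  apply Bornology.IsBounded.subset (Metric.isBounded_closedBall (x := (0 : EuclideanSpace ℝ (Fin m))) (r := 2 * Real.sqrt m))
  intro y hy
  simp only [Metric.mem_closedBall, dist_zero_right]
  apply euclid_norm_le (by positivity)
  have : ∀ i, (y i)^2 ≤ 4 := by
    intro i
    have h1 := (hy i).1; have h2 := (hy i).2
    have := abs_le.mp (hc i)
    nlinarith [hr i]
  calc ∑ i, (y i)^2 ≤ ∑ _i : Fin m, (4:ℝ) := Finset.sum_le_sum (fun i _ => this i)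
    _ = 4 * m := by simp [Finset.sum_const]; ring
    _ ≤ (2 * Real.sqrt m)^2 := by
        rw [mul_pow, Real.sq_sqrt (Nat.cast_nonneg m)]; norm_num

lemma prod_box {m : ℕ} (i0 : Fin m) (u v : ℝ) :
    ∏ i : Fin m, (if i = i0 then u else v) = u * v ^ (m - 1) := by
  rw [← Finset.mul_prod_erase Finset.univ _ (Finset.mem_univ i0)]
  simp only [if_pos rfl]
  congr 1
  rw [Finset.prod_congr rfl (fun i hi => if_neg (Finset.ne_of_mem_erase hi)),
    Finset.prod_const, Finset.card_erase_of_mem (Finset.mem_univ i0), Finset.card_univ,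
    Fintype.card_fin]

lemma sum_box {m : ℕ} (i0 : Fin m) (u v : ℝ) :
    ∑ i : Fin m, (if i = i0 then u else v) = u + v * ((m - 1 : ℕ) : ℝ) := by
  rw [← Finset.add_sum_erase Finset.univ _ (Finset.mem_univ i0)]
  simp only [if_pos rfl]
  congr 1
  rw [Finset.sum_congr rfl (fun i hi => if_neg (Finset.ne_of_mem_erase hi)),
    Finset.sum_const, Finset.card_erase_of_mem (Finset.mem_univ i0), Finset.card_univ,
    Fintype.card_fin, nsmul_eq_mul, mul_comm]

/-- Gaussian-beam lower bound for the Euclidean model oscillatory integral operator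
`T_λ f(x) = ∫_{ℝ^k} e^{iλ√(|u−y|²+|x'|²)} a(x,y) f(y) dy`, `x = (u,x') ∈ ℝ^k × ℝ^{n−k}`,
with `a` a nonnegative smooth bump supported near `{x ∼ 0, y ∼ e₁}` and bounded below by
`c₀ > 0` on a fixed neighborhood: for all `1 ≤ p, q ≤ ∞`,
`‖T_λ‖_{L^p(ℝ^k) → L^q(ℝ^n)} ≳ λ^{-(k-1)/(2p') - (n-1)/(2q)}`. -/
theorem gaussian_beam_lower_bound (n k : ℕ) (hk1 : 1 ≤ k) (hk2 : k ≤ n)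
    (p q : ℝ≥0∞) (hp : 1 ≤ p) (hq : 1 ≤ q)
    (a : (EuclideanSpace ℝ (Fin k) × EuclideanSpace ℝ (Fin (n - k))) →
      EuclideanSpace ℝ (Fin k) → ℝ)
    (ha_smooth : ContDiff ℝ (⊤ : ℕ∞) (fun z : (EuclideanSpace ℝ (Fin k) ×
      EuclideanSpace ℝ (Fin (n - k))) × EuclideanSpace ℝ (Fin k) => a z.1 z.2))
    (ha_nonneg : ∀ x y, 0 ≤ a x y)
    (ha_supp : ∀ x y, a x y ≠ 0 → ‖x.1‖ ≤ 1 / 10 ∧ ‖x.2‖ ≤ 1 / 10 ∧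
      ‖y - EuclideanSpace.single (⟨0, by omega⟩ : Fin k) 1‖ ≤ 1 / 10)
    (c₀ : ℝ) (hc₀ : 0 < c₀)
    (ha_lower : ∀ x y, ‖x.1‖ ≤ 1 / 20 → ‖x.2‖ ≤ 1 / 20 →
      ‖y - EuclideanSpace.single (⟨0, by omega⟩ : Fin k) 1‖ ≤ 1 / 20 → c₀ ≤ a x y) :
    ∃ c > (0:ℝ), ∀ lam : ℝ, 1 ≤ lam →
      ∃ f : EuclideanSpace ℝ (Fin k) → ℂ,
        eLpNorm f p volume ≠ 0 ∧ eLpNorm f p volume ≠ ⊤ ∧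
        ENNReal.ofReal
            (c * lam ^ (-(((k:ℝ) - 1) / 2) * ((1:ℝ≥0∞) - 1 / p).toReal
              - (((n:ℝ) - 1) / 2) * (1 / q).toReal)) *
            eLpNorm f p volume ≤
          eLpNorm (fun x : EuclideanSpace ℝ (Fin k) × EuclideanSpace ℝ (Fin (n - k)) =>
            ∫ y : EuclideanSpace ℝ (Fin k),
              Complex.exp (Complex.I * ((lam * Real.sqrt (‖x.1 - y‖ ^ 2 + ‖x.2‖ ^ 2) : ℝ) : ℂ)) *
                (a x y : ℂ) * f y) q volume := by
  have hk0 : 0 < k := hk1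
  have hn1 : 1 ≤ n := le_trans hk1 hk2
  set ι0 : Fin k := ⟨0, by omega⟩ with hι0
  -- constants
  set A : ℝ := (2/100) * (2 / (100 * k)) ^ (k - 1) with hA
  set B : ℝ := (2/100) * (2 / (100 * n)) ^ (n - 1) with hB
  have hA0 : 0 < A := by positivity
  have hB0 : 0 < B := by positivity
  have hA1 : A ≤ 1 := by
    rw [hA]
    have h2 : (2 : ℝ) / (100 * k) ≤ 1 := by
      rw [div_le_one (by positivity)]
      have : (1:ℝ) ≤ (k:ℝ) := by exact_mod_cast hk1
      nlinarith
    have := pow_le_one₀ (by positivity) h2 (n := k - 1)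
    nlinarith [pow_nonneg (show (0:ℝ) ≤ 2 / (100*k) by positivity) (k-1)]
  have hB1 : B ≤ 1 := by
    rw [hB]
    have h2 : (2 : ℝ) / (100 * n) ≤ 1 := by
      rw [div_le_one (by positivity)]
      have : (1:ℝ) ≤ (n:ℝ) := by exact_mod_cast hn1
      nlinarith
    have := pow_le_one₀ (by positivity) h2 (n := n - 1)
    nlinarith [pow_nonneg (show (0:ℝ) ≤ 2 / (100*n) by positivity) (n-1)]
  refine ⟨7/8 * c₀ * A * B, by positivity, ?_⟩
  intro lam hlam
  have hlam0 : (0:ℝ) < lam := lt_of_lt_of_le zero_lt_one hlam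
  set l : ℝ := lam ^ (-(1/2) : ℝ) with hl
  have hl0 : 0 < l := Real.rpow_pos_of_pos hlam0 _
  have hl1 : l ≤ 1 := Real.rpow_le_one_of_one_le_of_nonpos hlam (by norm_num)
  set s : ℝ := l / (100 * k) with hsdef
  set t : ℝ := l / (100 * n) with htdef
  have hs0 : 0 < s := by positivity
  have ht0 : 0 < t := by positivity
  have hts : t ≤ s := by
    apply div_le_div_of_nonneg_left hl0.le (by positivity)
    have : (k:ℝ) ≤ (n:ℝ) := by exact_mod_cast hk2
    nlinarith
  have hs1 : s ≤ 1/100 := by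
    rw [hsdef, div_le_div_iff₀ (by positivity) (by norm_num)]
    have : (1:ℝ) ≤ (k:ℝ) := by exact_mod_cast hk1
    nlinarith
  have ht1 : t ≤ 1/100 := le_trans hts hs1
  -- the boxes
  set cR : Fin k → ℝ := fun i => if i = ι0 then 1 else 0 with hcR
  set rR : Fin k → ℝ := fun i => if i = ι0 then 1/100 else s with hrR
  set rE : Fin k → ℝ := fun i => if i = ι0 then 1/100 else t with hrE
  set R : Set (EuclideanSpace ℝ (Fin k)) :=
    {y | ∀ i, y i ∈ Set.Ioo (cR i - rR i) (cR i + rR i)} with hRdef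
  set E1 : Set (EuclideanSpace ℝ (Fin k)) :=
    {y | ∀ i, y i ∈ Set.Ioo ((0:ℝ) - rE i) (0 + rE i)} with hE1def
  set E2 : Set (EuclideanSpace ℝ (Fin (n - k))) :=
    {y | ∀ i, y i ∈ Set.Ioo ((0:ℝ) - t) (0 + t)} with hE2def
  have hRmeas : MeasurableSet R := measurableSet_box _ _
  have hE1meas : MeasurableSet E1 := measurableSet_box _ (fun _ => rE _)
  have hE2meas : MeasurableSet E2 := measurableSet_box (fun _ => 0) (fun _ => t)
  set VR : ℝ := A * l ^ (k - 1) with hVR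
  set VE : ℝ := B * l ^ (n - 1) with hVE
  have hVR0 : 0 < VR := by positivity
  have hVE0 : 0 < VE := by positivity
  have hvolR : volume R = ENNReal.ofReal VR := by
    rw [hRdef, volume_box _ _ (fun i => by rw [hrR]; dsimp only; split <;> positivity)]
    congr 1
    have : (fun i => 2 * rR i) = fun i => if i = ι0 then (2/100 : ℝ) else 2 * s := by
      funext i; rw [hrR]; dsimp only; split <;> ring
    rw [this, prod_box, hVR, hA, hsdef]
    rw [mul_pow, div_pow, div_pow]
    ring
  have hvolE : volume (E1 ×ˢ E2) = ENNReal.ofReal VE := by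
    rw [MeasureTheory.Measure.volume_eq_prod, Measure.prod_prod]
    rw [hE1def, hE2def, volume_box _ _ (fun i => by rw [hrE]; dsimp only; split <;> positivity),
      volume_box (fun _ => 0) (fun _ => t) (fun i => ht0.le)]
    have h1 : ∏ i : Fin k, (2 * rE i) = (2/100) * (2*t)^(k-1) := by
      have : (fun i => 2 * rE i) = fun i => if i = ι0 then (2/100 : ℝ) else 2 * t := by
        funext i; rw [hrE]; dsimp only; split <;> ring
      rw [this, prod_box]
    have h2 : ∏ _i : Fin (n - k), (2 * t) = (2*t)^(n-k) := by
      rw [Finset.prod_const, Finset.card_univ, Fintype.card_fin]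
    rw [h1, h2, ← ENNReal.ofReal_mul (by positivity)]
    congr 1
    rw [hVE, hB, htdef]
    rw [show (2/100) * (2*(l/(100*n)))^(k-1) * (2*(l/(100*n)))^(n-k)
        = (2/100) * (2*(l/(100*n)))^((k-1)+(n-k)) by rw [pow_add]; ring]
    rw [show (k-1)+(n-k) = n - 1 by omega]
    rw [mul_pow, div_pow, div_pow]
    ring
  -- the test function
  set F : EuclideanSpace ℝ (Fin k) → ℂ :=
    fun y => Complex.exp ((-(lam * y ι0) : ℝ) * Complex.I) with hF
  set f : EuclideanSpace ℝ (Fin k) → ℂ := R.indicator F with hf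
  have hnormf : eLpNorm f p volume = (ENNReal.ofReal VR) ^ (1 / p.toReal) := by
    have hnf : (fun y => ‖f y‖) = R.indicator (fun _ => (1:ℝ)) := by
      funext y
      rw [hf, norm_indicator_eq_indicator_norm]
      by_cases h : y ∈ R
      · simp only [Set.indicator_of_mem h, hF,
          Complex.norm_exp_ofReal_mul_I]
      · simp [Set.indicator_of_notMem h]
    rw [← eLpNorm_norm, hnf,
      eLpNorm_indicator_const' hRmeas (by simp [hvolR, hVR0]) (zero_lt_one.trans_le hp).ne',
      hvolR]
    simp
  have hp0 : p ≠ 0 := (zero_lt_one.trans_le hp).ne'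
  have hq0 : q ≠ 0 := (zero_lt_one.trans_le hq).ne'
  refine ⟨f, ?_, ?_, ?_⟩
  · rw [hnormf]
    exact (ENNReal.rpow_pos (by simp [hVR0]) ENNReal.ofReal_ne_top).ne'
  · rw [hnormf]
    exact ENNReal.rpow_ne_top_of_nonneg (by positivity) ENNReal.ofReal_ne_top
  -- key pointwise lower bound
  have key : ∀ x : (EuclideanSpace ℝ (Fin k)) × (EuclideanSpace ℝ (Fin (n-k))),
      x ∈ E1 ×ˢ E2 → 7/8 * c₀ * VR ≤
        ‖∫ y, Complex.exp (Complex.I * ((lam * Real.sqrt (‖x.1 - y‖^2 + ‖x.2‖^2) : ℝ) : ℂ)) *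
          (a x y : ℂ) * f y‖ := by
    intro x hx
    have hkk : ((k - 1 : ℕ) : ℝ) = (k:ℝ) - 1 := by rw [Nat.cast_sub hk1]; simp
    have hnk : ((n - k : ℕ) : ℝ) = (n:ℝ) - (k:ℝ) := by rw [Nat.cast_sub hk2]
    have hkn : (k:ℝ) ≤ (n:ℝ) := by exact_mod_cast hk2
    have hk1' : (1:ℝ) ≤ (k:ℝ) := by exact_mod_cast hk1
    have hn1' : (1:ℝ) ≤ (n:ℝ) := by exact_mod_cast hn1
    have hts' : t ≤ 1/(100*(n:ℝ)) := by rw [htdef]; gcongr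
    have hss' : s ≤ 1/(100*(k:ℝ)) := by rw [hsdef]; gcongr
    -- coordinate bounds for x
    have hxu : ∀ i, |x.1 i| ≤ rE i := by
      intro i
      have h := hx.1 i
      rw [Set.mem_Ioo] at h
      rw [abs_le]
      constructor <;> linarith only [h.1, h.2]
    have hxv : ∀ j, |x.2 j| ≤ t := by
      intro j
      have h := hx.2 j
      rw [Set.mem_Ioo] at h
      rw [abs_le]
      constructor <;> linarith only [h.1, h.2]
    -- auxiliary numeric bounds
    have hsk : s^2 * ((k:ℝ) - 1) ≤ l^2/10000 := by
      have hsq : s^2 = l^2/(10000*(k:ℝ)^2) := by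
        rw [hsdef, div_pow]; congr 1; ring
      rw [hsq, div_mul_eq_mul_div, div_le_div_iff₀ (by positivity) (by norm_num)]
      have hkk2 : (k:ℝ)-1 ≤ (k:ℝ)^2 := by
        have h := mul_le_mul_of_nonneg_left hk1' (le_trans zero_le_one hk1')
        have h2 : (k:ℝ)^2 = (k:ℝ)*(k:ℝ) := sq ((k:ℝ))
        linarith only [h, h2]
      linarith only [mul_le_mul_of_nonneg_left hkk2 (sq_nonneg l)]
    have htn : t^2 * ((n:ℝ) - (k:ℝ)) ≤ l^2/10000 := by
      have hsq : t^2 = l^2/(10000*(n:ℝ)^2) := by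
        rw [htdef, div_pow]; congr 1; ring
      rw [hsq, div_mul_eq_mul_div, div_le_div_iff₀ (by positivity) (by norm_num)]
      have hnn2 : (n:ℝ)-(k:ℝ) ≤ (n:ℝ)^2 := by
        have h := mul_le_mul_of_nonneg_left hn1' (le_trans zero_le_one hn1')
        have h2 : (n:ℝ)^2 = (n:ℝ)*(n:ℝ) := sq ((n:ℝ))
        linarith only [h, h2, hk1', hkn]
      linarith only [mul_le_mul_of_nonneg_left hnn2 (sq_nonneg l)]
    have htk : t^2 * ((k:ℝ) - 1) ≤ l^2/10000 := by
      have hsq : t^2 ≤ s^2 := by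
        have := mul_le_mul hts hts ht0.le hs0.le
        have e1 : t^2 = t*t := sq t
        have e2 : s^2 = s*s := sq s
        linarith only [this, e1, e2]
      calc t^2 * ((k:ℝ)-1) ≤ s^2 * ((k:ℝ)-1) :=
            mul_le_mul_of_nonneg_right hsq (by linarith only [hk1'])
        _ ≤ l^2/10000 := hsk
    have hl21 : l^2 ≤ 1 := by nlinarith [hl0.le, hl1]
    -- norms of x
    have hx1norm : ‖x.1‖ ≤ 1/20 := by
      apply euclid_norm_le (by norm_num)
      have h1 : ∑ i, (x.1 i)^2 ≤ ∑ i, (rE i)^2 := by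
        apply Finset.sum_le_sum
        intro i _
        exact sq_le_sq' (abs_le.mp (hxu i)).1 (abs_le.mp (hxu i)).2
      have h2 : ∑ i, (rE i)^2 = (1/100)^2 + t^2 * ((k-1:ℕ):ℝ) := by
        rw [Finset.sum_congr rfl (fun i _ => show (rE i)^2 =
            if i = ι0 then ((1:ℝ)/100)^2 else t^2 by
          by_cases h : i = ι0 <;> simp [hrE, h])]
        exact sum_box ι0 _ _
      rw [h2, hkk] at h1
      linarith only [h1, htk, hl21]
    have hx2norm : ‖x.2‖ ≤ 1/20 := by
      apply euclid_norm_le (by norm_num)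
      have h1 : ∑ j, (x.2 j)^2 ≤ ∑ _j : Fin (n-k), t^2 := by
        apply Finset.sum_le_sum
        intro j _
        exact sq_le_sq' (abs_le.mp (hxv j)).1 (abs_le.mp (hxv j)).2
      have h2 : ∑ _j : Fin (n-k), t^2 = t^2 * ((n-k:ℕ):ℝ) := by
        rw [Finset.sum_const, Finset.card_univ, Fintype.card_fin, nsmul_eq_mul]; ring
      rw [h2, hnk] at h1
      linarith only [h1, htn, hl21]
    -- norm bound for y ∈ R
    have hynorm : ∀ y ∈ R, ‖y - EuclideanSpace.single ι0 1‖ ≤ 1/20 := by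
      intro y hy
      apply euclid_norm_le (by norm_num)
      have happ : ∀ i : Fin k,
          ((y - EuclideanSpace.single ι0 1 : EuclideanSpace ℝ (Fin k)) i) = y i - cR i := by
        intro i
        simp [EuclideanSpace.single_apply, hcR]
      have h1 : ∑ i, (((y - EuclideanSpace.single ι0 1 : EuclideanSpace ℝ (Fin k))) i)^2
          ≤ ∑ i, (rR i)^2 := by
        apply Finset.sum_le_sum
        intro i _
        have h := hy i
        rw [Set.mem_Ioo] at h
        rw [happ i]
        exact sq_le_sq' (by linarith only [h.1]) (by linarith only [h.2])
      have h2 : ∑ i, (rR i)^2 = (1/100)^2 + s^2 * ((k-1:ℕ):ℝ) := by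
        rw [Finset.sum_congr rfl (fun i _ => show (rR i)^2 =
            if i = ι0 then ((1:ℝ)/100)^2 else s^2 by
          by_cases h : i = ι0 <;> simp [hrR, h])]
        exact sum_box ι0 _ _
      rw [h2, hkk] at h1
      linarith only [h1, hsk, hl21]
    -- rewrite the integrand as indicator
    set G : EuclideanSpace ℝ (Fin k) → ℂ := fun y =>
      Complex.exp (Complex.I * ((lam * Real.sqrt (‖x.1 - y‖^2 + ‖x.2‖^2) : ℝ) : ℂ)) *
        (a x y : ℂ) * F y with hG
    have hsplit : (fun y => Complex.exp (Complex.I *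
          ((lam * Real.sqrt (‖x.1 - y‖^2 + ‖x.2‖^2) : ℝ) : ℂ)) * (a x y : ℂ) * f y)
        = R.indicator G := by
      funext y
      by_cases hy : y ∈ R
      · rw [Set.indicator_of_mem hy, hG, hf, Set.indicator_of_mem hy]
      · rw [Set.indicator_of_notMem hy, hf, Set.indicator_of_notMem hy, mul_zero]
    rw [hsplit, integral_indicator hRmeas]
    -- integrability
    have hGcont : Continuous G := by
      rw [hG]
      apply Continuous.mul
      apply Continuous.mul
      · apply Complex.continuous_exp.comp
        apply Continuous.mul continuous_const
        apply Complex.continuous_ofReal.comp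
        apply Continuous.mul continuous_const
        apply Real.continuous_sqrt.comp
        apply Continuous.add ?_ continuous_const
        exact ((continuous_const.sub continuous_id).norm).pow 2
      · apply Complex.continuous_ofReal.comp
        exact ha_smooth.continuous.comp (continuous_const.prodMk continuous_id)
      · rw [hF]
        apply Complex.continuous_exp.comp
        apply Continuous.mul ?_ continuous_const
        apply Complex.continuous_ofReal.comp
        apply Continuous.neg
        exact continuous_const.mul (EuclideanSpace.proj (𝕜 := ℝ) ι0).continuous
    have hbd : Bornology.IsBounded R := by
      rw [hRdef]
      apply bounded_box
      · intro i; rw [hcR]; dsimp only; split <;> norm_num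
      · intro i; rw [hrR]; dsimp only; split
        · norm_num
        · linarith [hs1]
    have hIntG : IntegrableOn G R volume :=
      (hGcont.continuousOn.integrableOn_compact hbd.isCompact_closure).mono_set
        subset_closure
    set w : ℂ := Complex.exp (((lam * x.1 ι0 : ℝ) : ℂ) * Complex.I) with hw
    have hIntwG : Integrable (fun y => w * G y) (volume.restrict R) := hIntG.const_mul w
    -- pointwise real-part bound
    have hpt : ∀ y ∈ R, 7/8 * c₀ ≤ (w * G y).re := by
      intro y hy
      have hy0 := hy ι0
      rw [Set.mem_Ioo] at hy0
      rw [show cR ι0 = 1 by rw [hcR]; simp, show rR ι0 = 1/100 by rw [hrR]; simp] at hy0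
      have hu0 := hxu ι0
      rw [show rE ι0 = 1/100 by rw [hrE]; simp] at hu0
      have hu0' := abs_le.mp hu0
      set d : ℝ := y ι0 - x.1 ι0 with hd
      have hd1 : 0.98 ≤ d := by rw [hd]; linarith only [hy0.1, hu0'.2]
      have hd2 : d ≤ 1.02 := by rw [hd]; linarith only [hy0.2, hu0'.1]
      set s' : ℝ := (∑ i ∈ Finset.univ.erase ι0, (x.1 i - y i)^2) + ∑ j, (x.2 j)^2
        with hs'def
      have hs'0 : 0 ≤ s' := by positivity
      have hdecomp : ‖x.1 - y‖^2 + ‖x.2‖^2 = d^2 + s' := by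
        rw [euclid_norm_sq, euclid_norm_sq, hs'def,
          ← Finset.add_sum_erase Finset.univ (fun i => ((x.1 - y) i)^2) (Finset.mem_univ ι0)]
        simp only [PiLp.sub_apply]
        rw [hd]
        ring
      have hs'small : s' ≤ 5/10000 * l^2 := by
        have hbound1 : ∀ i ∈ Finset.univ.erase ι0, (x.1 i - y i)^2 ≤ (2*s)^2 := by
          intro i hi
          have hi' : i ≠ ι0 := Finset.ne_of_mem_erase hi
          have h1 : |x.1 i| ≤ t := by
            have h := hxu i
            rw [hrE] at h
            simpa only [if_neg hi'] using h
          have h2 := hy i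
          rw [Set.mem_Ioo, show cR i = 0 by rw [hcR]; simp [hi'],
            show rR i = s by rw [hrR]; simp [hi']] at h2
          have h1' := abs_le.mp h1
          exact sq_le_sq' (by linarith only [h1'.1, h2.2, hts])
            (by linarith only [h1'.2, h2.1, hts])
        have hsum1 : (∑ i ∈ Finset.univ.erase ι0, (x.1 i - y i)^2)
            ≤ (2*s)^2 * ((k-1:ℕ):ℝ) := by
          calc (∑ i ∈ Finset.univ.erase ι0, (x.1 i - y i)^2)
              ≤ ∑ _i ∈ Finset.univ.erase ι0, (2*s)^2 := Finset.sum_le_sum hbound1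
            _ = (2*s)^2 * ((k-1:ℕ):ℝ) := by
                rw [Finset.sum_const, Finset.card_erase_of_mem (Finset.mem_univ ι0),
                  Finset.card_univ, Fintype.card_fin, nsmul_eq_mul]; ring
        have hsum2 : ∑ j, (x.2 j)^2 ≤ t^2 * ((n-k:ℕ):ℝ) := by
          calc ∑ j, (x.2 j)^2 ≤ ∑ _j : Fin (n-k), t^2 := by
                apply Finset.sum_le_sum
                intro j _
                exact sq_le_sq' (abs_le.mp (hxv j)).1 (abs_le.mp (hxv j)).2
            _ = t^2 * ((n-k:ℕ):ℝ) := by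
                rw [Finset.sum_const, Finset.card_univ, Fintype.card_fin, nsmul_eq_mul]; ring
        rw [hs'def]
        rw [hkk] at hsum1
        rw [hnk] at hsum2
        have hx4 : (2*s)^2*((k:ℝ)-1) = 4*(s^2*((k:ℝ)-1)) := by ring
        linarith only [hsum1, hsum2, hx4, hsk, htn]
      have hl2 : l^2 = lam⁻¹ := by
        rw [hl, ← Real.rpow_natCast (lam ^ (-(1/2):ℝ)) 2, ← Real.rpow_mul hlam0.le,
          show (-(1/2):ℝ) * (2:ℕ) = -1 by push_cast; ring, Real.rpow_neg_one]
      have hsqrt := hl_sqrt (show 0.9 ≤ d by linarith only [hd1]) hs'0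
      set θ : ℝ := lam * Real.sqrt (‖x.1 - y‖^2 + ‖x.2‖^2) - lam * y ι0 + lam * x.1 ι0
        with hθ
      have hθsmall : |θ| ≤ 5/10000 := by
        have heq : θ = lam * (Real.sqrt (d^2+s') - d) := by
          rw [hθ, hdecomp, hd]; ring
        rw [heq, abs_mul, abs_of_pos hlam0]
        calc lam * |Real.sqrt (d^2+s') - d| ≤ lam * s' :=
              mul_le_mul_of_nonneg_left hsqrt hlam0.le
          _ ≤ lam * (5/10000 * l^2) := mul_le_mul_of_nonneg_left hs'small hlam0.le
          _ = 5/10000 * (lam * lam⁻¹) := by rw [hl2]; ring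
          _ = 5/10000 := by rw [mul_inv_cancel₀ hlam0.ne', mul_one]
      have hcos : 7/8 ≤ Real.cos θ := by
        have h1 := Real.one_sub_sq_div_two_le_cos (x := θ)
        have h2 : θ^2 ≤ (5/10000)^2 := by
          rw [← sq_abs]
          exact pow_le_pow_left₀ (abs_nonneg θ) hθsmall 2
        linarith only [h1, h2]
      have hax : c₀ ≤ a x y := ha_lower x y hx1norm hx2norm (hynorm y hy)
      have hexp : w * G y = Complex.exp ((θ:ℂ) * Complex.I) * (a x y : ℂ) := by
        have h0 : w * G y = (w * Complex.exp (Complex.I *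
            ((lam * Real.sqrt (‖x.1 - y‖^2 + ‖x.2‖^2) : ℝ) : ℂ)) *
            Complex.exp (((-(lam * y ι0) : ℝ) : ℂ) * Complex.I)) * (a x y : ℂ) := by
          rw [hG, hF]; ring
        rw [h0, hw, ← Complex.exp_add, ← Complex.exp_add]
        congr 2
        rw [hθ]
        push_cast
        ring
      rw [hexp]
      have hre : (Complex.exp ((θ:ℂ) * Complex.I) * (a x y : ℂ)).re
          = Real.cos θ * a x y := by
        rw [Complex.mul_re, Complex.exp_ofReal_mul_I_re]
        simp
      rw [hre]
      exact mul_le_mul hcos hax hc₀.le (by linarith only [hcos] : (0:ℝ) ≤ Real.cos θ)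
    have hμR : volume R ≠ ⊤ := by rw [hvolR]; exact ENNReal.ofReal_ne_top
    calc 7/8*c₀*VR = (7/8*c₀) * (volume R).toReal := by
          rw [hvolR, ENNReal.toReal_ofReal hVR0.le]
      _ ≤ ∫ y in R, (w * G y).re := by
          have := setIntegral_ge_of_const_le hRmeas hμR hpt hIntwG.re
          rwa [smul_eq_mul, mul_comm, Measure.real] at this
      _ = (∫ y in R, w * G y).re := integral_re hIntwG
      _ ≤ ‖∫ y in R, w * G y‖ :=
          Complex.re_le_norm _
      _ = ‖w * ∫ y in R, G y‖ := by rw [integral_const_mul]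
      _ = ‖∫ y in R, G y‖ := by
          rw [norm_mul, hw, Complex.norm_exp_ofReal_mul_I, one_mul]
  -- comparison of eLpNorms
  have hTlower : eLpNorm ((E1 ×ˢ E2).indicator (fun _ => 7/8 * c₀ * VR)) q volume ≤
      eLpNorm (fun x : EuclideanSpace ℝ (Fin k) × EuclideanSpace ℝ (Fin (n - k)) =>
        ∫ y : EuclideanSpace ℝ (Fin k),
          Complex.exp (Complex.I * ((lam * Real.sqrt (‖x.1 - y‖ ^ 2 + ‖x.2‖ ^ 2) : ℝ) : ℂ)) *
            (a x y : ℂ) * f y) q volume := by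
    apply eLpNorm_mono
    intro x
    by_cases hx : x ∈ E1 ×ˢ E2
    · rw [Set.indicator_of_mem hx, Real.norm_eq_abs, abs_of_nonneg (by positivity)]
      exact key x hx
    · rw [Set.indicator_of_notMem hx]
      simp
  refine le_trans ?_ hTlower
  rw [eLpNorm_indicator_const' (hE1meas.prod hE2meas) (by simp [hvolE, hVE0]) hq0, hvolE, hnormf]
  -- now pure ENNReal/real computation
  set pt : ℝ := ((1:ℝ≥0∞)/p).toReal with hptdef
  set qt : ℝ := ((1:ℝ≥0∞)/q).toReal with hqtdef
  have h1p : (1:ℝ≥0∞)/p ≤ 1 := by rw [one_div]; exact ENNReal.inv_le_one.mpr hp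
  have h1q : (1:ℝ≥0∞)/q ≤ 1 := by rw [one_div]; exact ENNReal.inv_le_one.mpr hq
  have hpt0 : 0 ≤ pt := ENNReal.toReal_nonneg
  have hqt0 : 0 ≤ qt := ENNReal.toReal_nonneg
  have hpt1 : pt ≤ 1 := by
    have := ENNReal.toReal_mono ENNReal.one_ne_top h1p
    rwa [ENNReal.toReal_one] at this
  have hqt1 : qt ≤ 1 := by
    have := ENNReal.toReal_mono ENNReal.one_ne_top h1q
    rwa [ENNReal.toReal_one] at this
  have hptv : 1/p.toReal = pt := by
    rw [hptdef, ENNReal.toReal_div, ENNReal.toReal_one]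
  have hqtv : 1/q.toReal = qt := by
    rw [hqtdef, ENNReal.toReal_div, ENNReal.toReal_one]
  have hsub : ((1:ℝ≥0∞) - 1/p).toReal = 1 - pt := by
    rw [ENNReal.toReal_sub_of_le h1p ENNReal.one_ne_top, ENNReal.toReal_one, hptdef]
  rw [hptv, hqtv, hsub]
  rw [Real.enorm_eq_ofReal (by positivity), ENNReal.ofReal_rpow_of_pos hVR0,
    ENNReal.ofReal_rpow_of_pos hVE0, ← ENNReal.ofReal_mul (by positivity),
    ← ENNReal.ofReal_mul (by positivity)]
  apply ENNReal.ofReal_le_ofReal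
  -- real inequality
  set K : ℝ := ((k:ℝ) - 1)/2 with hK
  set N : ℝ := ((n:ℝ) - 1)/2 with hN
  have hlpow : ∀ m : ℕ, l ^ m = lam ^ (-(((m:ℝ))/2)) := by
    intro m
    rw [hl, ← Real.rpow_natCast (lam ^ (-(1/2):ℝ)) m, ← Real.rpow_mul hlam0.le]
    congr 1; ring
  have e1 : l ^ (k-1) = lam ^ (-K) := by
    rw [hlpow (k-1)]; congr 1; rw [Nat.cast_sub hk1, hK]; push_cast; ring
  have e2 : l ^ (n-1) = lam ^ (-N) := by
    rw [hlpow (n-1)]; congr 1; rw [Nat.cast_sub hn1, hN]; push_cast; ring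
  have hVRv : VR = A * lam^(-K) := by rw [hVR, e1]
  have hVEv : VE = B * lam^(-N) := by rw [hVE, e2]
  rw [hVRv, hVEv,
    Real.mul_rpow hA0.le (Real.rpow_nonneg hlam0.le _),
    Real.mul_rpow hB0.le (Real.rpow_nonneg hlam0.le _)]
  simp only [← Real.rpow_mul hlam0.le]
  have hBA : B * A ^ pt ≤ B ^ qt := by
    have h1 : A ^ pt ≤ 1 := Real.rpow_le_one hA0.le hA1 hpt0
    have h2 : B ≤ B ^ qt := by
      calc B = B ^ (1:ℝ) := (Real.rpow_one B).symm
      _ ≤ B ^ qt := Real.rpow_le_rpow_of_exponent_ge hB0 hB1 hqt1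
    calc B * A ^ pt ≤ B * 1 := by
          apply mul_le_mul_of_nonneg_left h1 hB0.le
      _ = B := mul_one B
      _ ≤ B ^ qt := h2
  have hexp : lam ^ (-K*(1-pt) - N*qt) * lam ^ (-K*pt) = lam ^ (-K - N*qt) := by
    rw [← Real.rpow_add hlam0]; congr 1; ring
  calc 7/8*c₀*A*B * lam ^ (-K*(1-pt) - N*qt) * (A ^ pt * lam ^ (-K*pt))
      = (7/8*c₀*A) * (B * A ^ pt) * (lam ^ (-K*(1-pt) - N*qt) * lam ^ (-K*pt)) := by ring
    _ = (7/8*c₀*A) * (B * A ^ pt) * lam ^ (-K - N*qt) := by rw [hexp]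
    _ ≤ (7/8*c₀*A) * (B ^ qt) * lam ^ (-K - N*qt) := by
        apply mul_le_mul_of_nonneg_right
          (mul_le_mul_of_nonneg_left hBA (by positivity)) (Real.rpow_nonneg hlam0.le _)
    _ = 7/8*c₀ * (A * lam ^ (-K)) * (B ^ qt * lam ^ (-N*qt)) := by
        rw [show -K - N*qt = -K + (-N*qt) by ring, Real.rpow_add hlam0]; ring
end
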